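/- arXiv:math/0512014 — 3 statements merged into one kernel-verified Lean document; each statement's English description precedes it below -/
import Mathlib

section
/- Let φ : [1,∞) → (0,∞) be a function such that x ↦ x²·φ(x) is non-increasing and tends to 0 as x tends to infinity. Then there exists a transcendental real number α which is approximable at order φ (there exist infinitely many rationals p/q with q > 0 and |α − p/q| < φ(q)) but which, for every c with 0 < c < 1, is not approximable at order c·φ (only finitely many rationals p/q with q > 0 satisfy |α − p/q| < c·φ(q)). -/
open Filter Topology

noncomputable section

namespace Approx5

open scoped Classical

variable (φ : ℝ → ℝ) (β : ℕ → ℝ)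

/-- `K(q) = 1/(q² φ(q))`. -/
def KK (q : ℤ) : ℝ := 1 / ((q : ℝ) ^ 2 * φ q)

/-- candidate value for next convergent with partial quotient `j`; the state
`s = (p_{k-1}, q_{k-1}, p_k, q_k)`. -/
def vv (s : ℤ × ℤ × ℤ × ℤ) (j : ℤ) : ℝ :=
  ((j * s.2.2.1 + s.1 : ℤ) : ℝ) / ((j * s.2.2.2 + s.2.1 : ℤ) : ℝ)

def bigA (s : ℤ × ℤ × ℤ × ℤ) : ℤ := ⌊KK φ s.2.2.2⌋ + 1

/-- choice of the next partial quotient, dodging the point `b`. -/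
def ch (b : ℝ) (s : ℤ × ℤ × ℤ × ℤ) : ℤ :=
  if b ∈ Set.uIcc (vv s (bigA φ s)) (vv s (bigA φ s + 1)) then bigA φ s + 2 else bigA φ s

def st : ℕ → ℤ × ℤ × ℤ × ℤ
  | 0 => (1, 0, 0, 1)
  | k + 1 =>
      ((st k).2.2.1, (st k).2.2.2,
       ch φ (β k) (st k) * (st k).2.2.1 + (st k).1,
       ch φ (β k) (st k) * (st k).2.2.2 + (st k).2.1)

def a (k : ℕ) : ℤ := ch φ (β k) (st φ β k)
def p (k : ℕ) : ℤ := (st φ β k).2.2.1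
def q (k : ℕ) : ℤ := (st φ β k).2.2.2
def P (k : ℕ) : ℤ := (st φ β k).1
def Q (k : ℕ) : ℤ := (st φ β k).2.1

@[simp] lemma p_zero : p φ β 0 = 0 := rfl
@[simp] lemma q_zero : q φ β 0 = 1 := rfl
@[simp] lemma P_zero : P φ β 0 = 1 := rfl
@[simp] lemma Q_zero : Q φ β 0 = 0 := rfl
lemma p_succ (k : ℕ) : p φ β (k + 1) = a φ β k * p φ β k + P φ β k := rfl
lemma q_succ (k : ℕ) : q φ β (k + 1) = a φ β k * q φ β k + Q φ β k := rfl
lemma P_succ (k : ℕ) : P φ β (k + 1) = p φ β k := rfl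
lemma Q_succ (k : ℕ) : Q φ β (k + 1) = q φ β k := rfl

lemma bigA_eq (k : ℕ) : bigA φ (st φ β k) = ⌊KK φ (q φ β k)⌋ + 1 := rfl

lemma a_cases (k : ℕ) :
    a φ β k = ⌊KK φ (q φ β k)⌋ + 3 ∨ a φ β k = ⌊KK φ (q φ β k)⌋ + 1 := by
  unfold a ch
  split
  · left; rw [bigA_eq]; ring
  · right; rw [bigA_eq]

lemma KK_pos (hφpos : ∀ x : ℝ, 1 ≤ x → 0 < φ x) {m : ℤ} (hm : 1 ≤ m) : 0 < KK φ m := by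
  have h1 : (1 : ℝ) ≤ (m : ℝ) := by exact_mod_cast hm
  have h2 := hφpos m h1
  have hm2 : (0:ℝ) < (m:ℝ)^2 := by positivity
  unfold KK
  positivity

lemma a_lb (k : ℕ) : ⌊KK φ (q φ β k)⌋ + 1 ≤ a φ β k := by
  rcases a_cases φ β k with h | h <;> omega

lemma a_ub (k : ℕ) : a φ β k ≤ ⌊KK φ (q φ β k)⌋ + 3 := by
  rcases a_cases φ β k with h | h <;> omega

section invariants

variable (hφpos : ∀ x : ℝ, 1 ≤ x → 0 < φ x)
include hφpos

lemma one_le_a {k : ℕ} (hq : 1 ≤ q φ β k) : 1 ≤ a φ β k := by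
  have h := a_lb φ β k
  have h2 : 0 ≤ ⌊KK φ (q φ β k)⌋ := Int.floor_nonneg.2 (KK_pos φ hφpos hq).le
  omega

lemma basic : ∀ k : ℕ, 1 ≤ q φ β k ∧ 0 ≤ Q φ β k ∧ Q φ β k ≤ q φ β k := by
  intro k
  induction k with
  | zero => exact ⟨le_refl _, le_refl _, by norm_num⟩
  | succ k ih =>
    obtain ⟨h1, h2, h3⟩ := ih
    have ha : 1 ≤ a φ β k := one_le_a φ β hφpos h1
    refine ⟨?_, ?_, ?_⟩
    · rw [q_succ]; nlinarith
    · rw [Q_succ]; exact h1.trans' (by norm_num)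
    · rw [Q_succ, q_succ]; nlinarith

lemma q_pos (k : ℕ) : 1 ≤ q φ β k := (basic φ β hφpos k).1

lemma one_le_a' (k : ℕ) : 1 ≤ a φ β k := one_le_a φ β hφpos (q_pos φ β hφpos k)

lemma q_mono_succ (k : ℕ) : q φ β k ≤ q φ β (k + 1) := by
  obtain ⟨h1, h2, h3⟩ := basic φ β hφpos k
  have ha : 1 ≤ a φ β k := one_le_a φ β hφpos h1
  rw [q_succ]; nlinarith

lemma q_mono : Monotone (q φ β) := monotone_nat_of_le_succ (q_mono_succ φ β hφpos)

lemma q_succ_ge_mul (k : ℕ) : a φ β k * q φ β k ≤ q φ β (k + 1) := by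
  obtain ⟨h1, h2, h3⟩ := basic φ β hφpos k
  rw [q_succ]; omega

lemma q_succ_le (k : ℕ) : q φ β (k + 1) ≤ (a φ β k + 1) * q φ β k := by
  obtain ⟨h1, h2, h3⟩ := basic φ β hφpos k
  rw [q_succ]; nlinarith

lemma q_two_step (k : ℕ) : q φ β k + q φ β (k + 1) ≤ q φ β (k + 2) := by
  have h1 := q_pos φ β hφpos (k+1)
  have ha : 1 ≤ a φ β (k+1) := one_le_a' φ β hφpos (k+1)
  have hs := q_succ φ β (k+1)
  rw [Q_succ φ β k] at hs
  nlinarith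

lemma q_two_step_eq (k : ℕ) :
    q φ β (k + 2) = a φ β (k + 1) * q φ β (k + 1) + q φ β k := by
  have hs := q_succ φ β (k+1)
  rw [Q_succ φ β k] at hs
  exact hs

lemma q_ge (k : ℕ) : (k : ℤ) ≤ q φ β (k + 1) := by
  induction k with
  | zero => simpa using (q_pos φ β hφpos 1).trans' (by norm_num)
  | succ k ih =>
    have h := q_two_step φ β hφpos k
    have h2 := q_pos φ β hφpos k
    have h3 : q φ β (k+1+1) = q φ β (k+2) := rfl
    push_cast
    omega

end invariants

lemma det (k : ℕ) : p φ β k * Q φ β k - P φ β k * q φ β k = (-1) ^ (k + 1) := by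
  induction k with
  | zero => simp
  | succ k ih =>
    rw [p_succ, q_succ, P_succ, Q_succ]
    have h : (-1 : ℤ) ^ (k + 1 + 1) = -(-1) ^ (k + 1) := by ring
    rw [h, ← ih]; ring

lemma det' (k : ℕ) : p φ β (k + 1) * q φ β k - p φ β k * q φ β (k + 1) = (-1) ^ k := by
  have h := det φ β (k + 1)
  rw [P_succ, Q_succ] at h
  have h2 : (-1 : ℤ) ^ (k + 1 + 1) = (-1) ^ k := by ring
  rw [h2] at h
  exact h

lemma coprime_pq (k : ℕ) : IsCoprime (p φ β k) (q φ β k) := by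
  have h := det φ β k
  rcases Nat.even_or_odd k with he | ho
  · have h1 : (-1 : ℤ) ^ (k + 1) = -1 := Odd.neg_one_pow (by exact he.add_one)
    rw [h1] at h
    exact ⟨-(Q φ β k), P φ β k, by linarith⟩
  · have h1 : (-1 : ℤ) ^ (k + 1) = 1 := Even.neg_one_pow (by exact ho.add_one)
    rw [h1] at h
    exact ⟨Q φ β k, -(P φ β k), by linarith⟩

variable (φ : ℝ → ℝ) (β : ℕ → ℝ)

def qR (k : ℕ) : ℝ := ((q φ β k : ℤ) : ℝ)
def pR (k : ℕ) : ℝ := ((p φ β k : ℤ) : ℝ)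
def X (k : ℕ) : ℝ := pR φ β k / qR φ β k

lemma neg_one_sq_pow (k : ℕ) : (-1 : ℝ)^k * (-1:ℝ)^k = 1 := by
  rw [← pow_add]
  exact Even.neg_one_pow ⟨k, rfl⟩

section reals

variable (hφpos : ∀ x : ℝ, 1 ≤ x → 0 < φ x)
include hφpos

lemma qR_ge_one (k : ℕ) : 1 ≤ qR φ β k := by
  have := q_pos φ β hφpos k
  unfold qR; exact_mod_cast this

lemma qR_pos (k : ℕ) : 0 < qR φ β k := lt_of_lt_of_le one_pos (qR_ge_one φ β hφpos k)

lemma qR_mono {j k : ℕ} (h : j ≤ k) : qR φ β j ≤ qR φ β k := by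
  unfold qR; exact_mod_cast q_mono φ β hφpos h

lemma qR_two_step (k : ℕ) : qR φ β k + qR φ β (k+1) ≤ qR φ β (k+2) := by
  have := q_two_step φ β hφpos k
  unfold qR; exact_mod_cast this

lemma X_diff (k : ℕ) :
    X φ β (k+1) - X φ β k = (-1 : ℝ)^k / (qR φ β k * qR φ β (k+1)) := by
  have hdR : pR φ β (k+1) * qR φ β k - pR φ β k * qR φ β (k+1) = (-1:ℝ)^k := by
    have := det' φ β k
    unfold pR qR
    exact_mod_cast this
  have h0 : qR φ β k ≠ 0 := (qR_pos φ β hφpos k).ne'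
  have h1 : qR φ β (k+1) ≠ 0 := (qR_pos φ β hφpos (k+1)).ne'
  rw [X, X, div_sub_div _ _ h1 h0]
  rw [show pR φ β (k+1) * qR φ β k - qR φ β (k+1) * pR φ β k = (-1:ℝ)^k by
    linear_combination hdR]
  rw [mul_comm (qR φ β (k+1)) (qR φ β k)]

lemma alt : ∀ d k : ℕ, 0 ≤ (-1:ℝ)^k * (X φ β (k+d) - X φ β k) ∧
    (-1:ℝ)^k * (X φ β (k+d) - X φ β k) ≤ 1/(qR φ β k * qR φ β (k+1)) := by
  intro d
  induction d with
  | zero =>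
    intro k
    constructor
    · simp
    · have := qR_pos φ β hφpos k
      have := qR_pos φ β hφpos (k+1)
      simp only [Nat.add_zero, sub_self, mul_zero]
      positivity
  | succ d ih =>
    intro k
    have he : k + (d+1) = (k+1) + d := by omega
    rw [he]
    have hsplit : (-1:ℝ)^k * (X φ β ((k+1)+d) - X φ β k)
        = 1/(qR φ β k * qR φ β (k+1))
          - (-1:ℝ)^(k+1) * (X φ β ((k+1)+d) - X φ β (k+1)) := by
      have hdiff := X_diff φ β hφpos k
      have hsq := neg_one_sq_pow k
      rw [pow_succ]
      linear_combination ((-1:ℝ)^k) * hdiff + (1/(qR φ β k * qR φ β (k+1))) * hsq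
    obtain ⟨ih1, ih2⟩ := ih (k+1)
    have hle : 1/(qR φ β (k+1) * qR φ β (k+2)) ≤ 1/(qR φ β k * qR φ β (k+1)) := by
      have p0 := qR_pos φ β hφpos k
      have p1 := qR_pos φ β hφpos (k+1)
      have p2 := qR_pos φ β hφpos (k+2)
      have hq : qR φ β k ≤ qR φ β (k+2) := qR_mono φ β hφpos (by omega)
      have : qR φ β k * qR φ β (k+1) ≤ qR φ β (k+1) * qR φ β (k+2) := by nlinarith
      exact one_div_le_one_div_of_le (by positivity) this
    constructor
    · rw [hsplit]
      have : (-1:ℝ)^(k+1) * (X φ β ((k+1)+d) - X φ β (k+1))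
          ≤ 1/(qR φ β (k+1) * qR φ β (k+2)) := ih2
      linarith
    · rw [hsplit]
      linarith

lemma cauchy : CauchySeq (X φ β) := by
  apply cauchySeq_of_le_tendsto_0 (fun N => 2 / qR φ β N)
  · intro n m N hn hm
    have key : ∀ j, N ≤ j → |X φ β j - X φ β N| ≤ 1 / qR φ β N := by
      intro j hj
      obtain ⟨d, rfl⟩ := Nat.exists_eq_add_of_le hj
      obtain ⟨h1, h2⟩ := alt φ β hφpos d N
      have hsq := neg_one_sq_pow N
      have habs : |X φ β (N+d) - X φ β N| ≤ 1/(qR φ β N * qR φ β (N+1)) := by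
        rcases Nat.even_or_odd N with he | ho
        · rw [he.neg_one_pow] at h1 h2
          rw [abs_le]; constructor <;> nlinarith [qR_pos φ β hφpos N, qR_pos φ β hφpos (N+1)]
        · rw [ho.neg_one_pow] at h1 h2
          rw [abs_le]; constructor <;> nlinarith [qR_pos φ β hφpos N, qR_pos φ β hφpos (N+1)]
      have : 1/(qR φ β N * qR φ β (N+1)) ≤ 1 / qR φ β N := by
        have p0 := qR_pos φ β hφpos N
        have p1 := qR_ge_one φ β hφpos (N+1)
        rw [div_le_div_iff₀ (by positivity) p0]
        nlinarith
      linarith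
    calc dist (X φ β n) (X φ β m)
        ≤ dist (X φ β n) (X φ β N) + dist (X φ β m) (X φ β N) := dist_triangle_right _ _ _
      _ ≤ 1 / qR φ β N + 1 / qR φ β N := by
          rw [Real.dist_eq, Real.dist_eq]
          exact add_le_add (key n hn) (key m hm)
      _ = 2 / qR φ β N := by ring
  · have hq : Tendsto (fun N => qR φ β N) atTop atTop := by
      apply tendsto_atTop_mono (f := fun N : ℕ => (N : ℝ) - 1)
      · intro N
        cases N with
        | zero => simpa using (qR_ge_one φ β hφpos 0).trans' (by norm_num)
        | succ N =>
          have := q_ge φ β hφpos N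
          have : (N : ℝ) ≤ qR φ β (N+1) := by unfold qR; exact_mod_cast this
          push_cast
          linarith
      · exact tendsto_atTop_add_const_right atTop (-1) tendsto_natCast_atTop_atTop
    have h0 := hq.inv_tendsto_atTop
    have h2 : Tendsto (fun N => 2 * (qR φ β N)⁻¹) atTop (𝓝 0) := by
      simpa using h0.const_mul (2:ℝ)
    simpa [div_eq_mul_inv] using h2

end reals

section limit

variable (hφpos : ∀ x : ℝ, 1 ≤ x → 0 < φ x) (α : ℝ)
    (hα : Tendsto (X φ β) atTop (𝓝 α))

def u (k : ℕ) : ℝ := (-1 : ℝ)^k * (α - X φ β k)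

include hφpos hα

lemma u_nonneg (k : ℕ) : 0 ≤ u φ β α k := by
  have ht : Tendsto (fun m => (-1:ℝ)^k * (X φ β m - X φ β k)) atTop (𝓝 (u φ β α k)) := by
    unfold u
    exact ((hα.sub_const (X φ β k)).const_mul ((-1:ℝ)^k))
  apply ge_of_tendsto ht
  filter_upwards [eventually_ge_atTop k] with m hm
  obtain ⟨d, rfl⟩ := Nat.exists_eq_add_of_le hm
  exact (alt φ β hφpos d k).1

omit hα in
lemma u_add (k : ℕ) : u φ β α k + u φ β α (k+1) = 1/(qR φ β k * qR φ β (k+1)) := by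
  have hdiff := X_diff φ β hφpos k
  have hsq := neg_one_sq_pow k
  unfold u
  rw [pow_succ]
  linear_combination ((-1:ℝ)^k) * hdiff + (1/(qR φ β k * qR φ β (k+1))) * hsq

lemma u_ub (k : ℕ) : u φ β α k ≤ 1/(qR φ β k * qR φ β (k+1)) := by
  have h1 := u_add φ β hφpos α k
  have h2 := u_nonneg φ β hφpos α hα (k+1)
  linarith

lemma u_pos (k : ℕ) : 0 < u φ β α k := by
  have h1 := u_add φ β hφpos α k
  have h2 := u_ub φ β hφpos α hα (k+1)
  have hstrict : 1/(qR φ β (k+1) * qR φ β (k+2)) < 1/(qR φ β k * qR φ β (k+1)) := by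
    have p0 := qR_pos φ β hφpos k
    have p1 := qR_pos φ β hφpos (k+1)
    have p2 := qR_pos φ β hφpos (k+2)
    have hq : qR φ β k + 1 ≤ qR φ β (k+2) := by
      have := qR_two_step φ β hφpos k
      have := qR_ge_one φ β hφpos (k+1)
      linarith
    apply one_div_lt_one_div_of_lt (by positivity)
    nlinarith
  linarith

lemma u_lt (k : ℕ) : u φ β α k < 1/(qR φ β k * qR φ β (k+1)) := by
  have h1 := u_add φ β hφpos α k
  have h2 := u_pos φ β hφpos α hα (k+1)
  linarith

lemma abs_sub_eq_u (k : ℕ) : |α - X φ β k| = u φ β α k := by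
  have hpos := u_pos φ β hφpos α hα k
  rcases Nat.even_or_odd k with he | ho
  · have : u φ β α k = α - X φ β k := by unfold u; rw [he.neg_one_pow]; ring
    rw [← this]; exact abs_of_pos hpos
  · have : u φ β α k = -(α - X φ β k) := by unfold u; rw [ho.neg_one_pow]; ring
    rw [show α - X φ β k = -(u φ β α k) by linarith [this]]
    rw [abs_neg]; exact abs_of_pos hpos

omit hα in
lemma phi_eq (k : ℕ) : φ (qR φ β k) = 1/(KK φ (q φ β k) * qR φ β k^2) := by
  have hq1 := qR_ge_one φ β hφpos k
  have hφq : 0 < φ (qR φ β k) := hφpos _ hq1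
  have hne : (qR φ β k:ℝ)^2 * φ (qR φ β k) ≠ 0 := by positivity
  rw [KK]
  show φ (qR φ β k) = 1 / (1 / (qR φ β k ^ 2 * φ (qR φ β k)) * qR φ β k ^ 2)
  field_simp

omit hα in
lemma KK_lt_a (k : ℕ) : KK φ (q φ β k) < (a φ β k : ℝ) := by
  have h := a_lb φ β k
  have h2 : ((⌊KK φ (q φ β k)⌋ : ℤ) : ℝ) + 1 ≤ (a φ β k : ℝ) := by exact_mod_cast h
  have := Int.lt_floor_add_one (KK φ (q φ β k))
  linarith

omit hα in
lemma a_le_KK (k : ℕ) : (a φ β k : ℝ) ≤ KK φ (q φ β k) + 3 := by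
  have h := a_ub φ β k
  have h2 : (a φ β k : ℝ) ≤ ((⌊KK φ (q φ β k)⌋ : ℤ) : ℝ) + 3 := by exact_mod_cast h
  have := Int.floor_le (KK φ (q φ β k))
  linarith

lemma u_lt_phi (k : ℕ) : u φ β α k < φ (qR φ β k) := by
  have hKpos := KK_pos φ hφpos (q_pos φ β hφpos k)
  have hq0 := qR_pos φ β hφpos k
  have hq1 := qR_pos φ β hφpos (k+1)
  have haR : KK φ (q φ β k) < (a φ β k : ℝ) := KK_lt_a φ β hφpos k
  have hmul : (a φ β k : ℝ) * qR φ β k ≤ qR φ β (k+1) := by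
    have := q_succ_ge_mul φ β hφpos k
    unfold qR; exact_mod_cast this
  have h1 : u φ β α k < 1/(qR φ β k * qR φ β (k+1)) := u_lt φ β hφpos α hα k
  have h2 : 1/(qR φ β k * qR φ β (k+1)) ≤ 1/(KK φ (q φ β k) * qR φ β k^2) := by
    apply one_div_le_one_div_of_le (by positivity)
    nlinarith
  rw [phi_eq φ β hφpos]
  linarith

lemma u_ge (k : ℕ) : 1/((KK φ (q φ β k) + 5) * qR φ β k^2) ≤ u φ β α k := by
  have hKpos := KK_pos φ hφpos (q_pos φ β hφpos k)
  have p0 := qR_pos φ β hφpos k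
  have p1 := qR_pos φ β hφpos (k+1)
  have p2 := qR_pos φ β hφpos (k+2)
  have ha0 : (1:ℝ) ≤ (a φ β k : ℝ) := by exact_mod_cast one_le_a' φ β hφpos k
  have ha1 : (1:ℝ) ≤ (a φ β (k+1) : ℝ) := by exact_mod_cast one_le_a' φ β hφpos (k+1)
  -- lower bound u k ≥ a_{k+1}/(qRk qRk+2)
  have h1 : 1/(qR φ β k * qR φ β (k+1)) - 1/(qR φ β (k+1) * qR φ β (k+2)) ≤ u φ β α k := by
    have := u_add φ β hφpos α k
    have := u_ub φ β hφpos α hα (k+1)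
    linarith
  have h3 : qR φ β (k+2) = (a φ β (k+1) : ℝ) * qR φ β (k+1) + qR φ β k := by
    have := q_two_step_eq φ β hφpos k
    unfold qR; exact_mod_cast this
  have h2 : 1/(qR φ β k * qR φ β (k+1)) - 1/(qR φ β (k+1) * qR φ β (k+2))
      = (a φ β (k+1) : ℝ)/(qR φ β k * qR φ β (k+2)) := by
    rw [div_sub_div _ _ (by positivity) (by positivity)]
    rw [show qR φ β k * qR φ β (k+1) * (qR φ β (k+1) * qR φ β (k+2))
        = (qR φ β k * qR φ β (k+2)) * (qR φ β (k+1) * qR φ β (k+1)) by ring]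
    rw [show 1 * (qR φ β (k+1) * qR φ β (k+2)) - qR φ β k * qR φ β (k+1) * 1
        = qR φ β (k+1) * (qR φ β (k+2) - qR φ β k) by ring, h3]
    rw [show qR φ β (k+1) * ((a φ β (k+1):ℝ) * qR φ β (k+1) + qR φ β k - qR φ β k)
        = (a φ β (k+1):ℝ) * (qR φ β (k+1) * qR φ β (k+1)) by ring]
    rw [mul_div_mul_right _ _ (by positivity)]
  -- qRk+2 ≤ a_{k+1} (a_k + 2) qRk
  have hq1le : qR φ β (k+1) ≤ ((a φ β k:ℝ) + 1) * qR φ β k := by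
    have := q_succ_le φ β hφpos k
    unfold qR; exact_mod_cast this
  have h4 : qR φ β (k+2) ≤ (a φ β (k+1):ℝ) * (((a φ β k:ℝ) + 2) * qR φ β k) := by
    rw [h3]; nlinarith
  have h5 : (a φ β (k+1):ℝ)/(qR φ β k * qR φ β (k+2))
      ≥ 1/(((a φ β k:ℝ) + 2) * qR φ β k^2) := by
    rw [ge_iff_le, div_le_div_iff₀ (by positivity) (by positivity)]
    nlinarith
  have h6 : 1/((KK φ (q φ β k) + 5) * qR φ β k^2) ≤ 1/(((a φ β k:ℝ) + 2) * qR φ β k^2) := by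
    apply one_div_le_one_div_of_le (by positivity)
    have := a_le_KK φ β hφpos k
    nlinarith
  linarith

lemma u_ge_c {c : ℝ} (hc0 : 0 < c) (k : ℕ)
    (hK : c * (KK φ (q φ β k) + 5) ≤ KK φ (q φ β k)) :
    c * φ (qR φ β k) ≤ u φ β α k := by
  have hKpos := KK_pos φ hφpos (q_pos φ β hφpos k)
  have p0 := qR_pos φ β hφpos k
  have h1 := u_ge φ β hφpos α hα k
  rw [phi_eq φ β hφpos]
  have h2 : c * (1/(KK φ (q φ β k) * qR φ β k^2)) ≤ 1/((KK φ (q φ β k) + 5) * qR φ β k^2) := by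
    rw [mul_one_div, div_le_div_iff₀ (by positivity) (by positivity)]
    ring_nf
    nlinarith
  calc c * (1/(KK φ (q φ β k) * qR φ β k^2)) ≤ 1/((KK φ (q φ β k) + 5) * qR φ β k^2) := h2
    _ ≤ u φ β α k := h1

end limit

lemma neg_one_pow_cases (n : ℕ) : (-1:ℝ)^n = 1 ∨ (-1:ℝ)^n = -1 := by
  rcases Nat.even_or_odd n with h | h
  · exact Or.inl h.neg_one_pow
  · exact Or.inr h.neg_one_pow

lemma mem_uIcc_of {σ w u' z : ℝ} (hσ : σ = 1 ∨ σ = -1) (h0 : 0 ≤ u') (h1 : u' ≤ w) :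
    z + σ*u' ∈ Set.uIcc z (z + σ*w) := by
  rcases hσ with rfl | rfl
  · rw [Set.uIcc_of_le (by linarith)]
    constructor <;> simp <;> linarith
  · rw [Set.uIcc_of_ge (by linarith)]
    constructor <;> simp <;> linarith

lemma uIcc_disjoint {σ t1 t2 t3 t4 x : ℝ} (hσ : σ = 1 ∨ σ = -1)
    (h12 : 0 < σ*(t2 - t1)) (h23 : 0 < σ*(t3 - t2)) (h34 : 0 < σ*(t4 - t3))
    (hx : x ∈ Set.uIcc t1 t2) : x ∉ Set.uIcc t3 t4 := by
  rcases hσ with rfl | rfl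
  · rw [Set.uIcc_of_le (by linarith)] at hx
    rw [Set.uIcc_of_le (by linarith)]
    obtain ⟨hx1, hx2⟩ := hx
    intro hmem
    obtain ⟨h3, h4⟩ := hmem
    linarith
  · rw [Set.uIcc_of_ge (by linarith)] at hx
    rw [Set.uIcc_of_ge (by linarith)]
    obtain ⟨hx1, hx2⟩ := hx
    intro hmem
    obtain ⟨h3, h4⟩ := hmem
    linarith

section dodge

variable (hφpos : ∀ x : ℝ, 1 ≤ x → 0 < φ x) (α : ℝ)
    (hα : Tendsto (X φ β) atTop (𝓝 α))

include hφpos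

lemma vv_den_pos (k : ℕ) {j : ℤ} (hj : 1 ≤ j) :
    (0:ℝ) < ((j * q φ β k + Q φ β k : ℤ) : ℝ) := by
  obtain ⟨h1, h2, h3⟩ := basic φ β hφpos k
  have : (0:ℤ) < j * q φ β k + Q φ β k := by nlinarith
  exact_mod_cast this

lemma vv_step (k : ℕ) {j : ℤ} (hj : 1 ≤ j) :
    0 < (-1:ℝ)^(k+1) * (vv (st φ β k) (j+1) - vv (st φ β k) j) := by
  have hd1 := vv_den_pos φ β hφpos k hj
  have hd2 := vv_den_pos φ β hφpos k (show (1:ℤ) ≤ j + 1 by omega)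
  have hnum : ((j+1) * p φ β k + P φ β k) * (j * q φ β k + Q φ β k)
      - ((j+1) * q φ β k + Q φ β k) * (j * p φ β k + P φ β k) = (-1:ℤ)^(k+1) := by
    linear_combination det φ β k
  have hdiff : vv (st φ β k) (j+1) - vv (st φ β k) j
      = ((-1:ℝ)^(k+1)) / (((j+1) * q φ β k + Q φ β k : ℤ) * ((j * q φ β k + Q φ β k : ℤ)) : ℝ) := by
    show ((((j+1) * p φ β k + P φ β k : ℤ)):ℝ) / (((j+1) * q φ β k + Q φ β k : ℤ):ℝ)
        - (((j * p φ β k + P φ β k : ℤ)):ℝ) / ((j * q φ β k + Q φ β k : ℤ):ℝ) = _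
    rw [div_sub_div _ _ (ne_of_gt hd2) (ne_of_gt hd1)]
    have hnumR : (((j+1) * p φ β k + P φ β k : ℤ):ℝ) * ((j * q φ β k + Q φ β k : ℤ):ℝ)
        - (((j+1) * q φ β k + Q φ β k : ℤ):ℝ) * ((j * p φ β k + P φ β k : ℤ):ℝ)
        = (-1:ℝ)^(k+1) := by exact_mod_cast hnum
    rw [hnumR]
  rw [hdiff]
  have hsq := neg_one_sq_pow (k+1)
  have hpos : (0:ℝ) < (((j+1) * q φ β k + Q φ β k : ℤ):ℝ) * ((j * q φ β k + Q φ β k : ℤ):ℝ) :=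
    mul_pos hd2 hd1
  rw [mul_div_assoc', hsq]
  exact div_pos one_pos hpos

lemma one_le_bigA (k : ℕ) : 1 ≤ bigA φ (st φ β k) := by
  rw [bigA_eq]
  have : 0 ≤ ⌊KK φ (q φ β k)⌋ := Int.floor_nonneg.2 (KK_pos φ hφpos (q_pos φ β hφpos k)).le
  omega

lemma beta_not_mem (k : ℕ) :
    β k ∉ Set.uIcc (vv (st φ β k) (a φ β k)) (vv (st φ β k) (a φ β k + 1)) := by
  have hA := one_le_bigA φ β hφpos k
  have hσ := neg_one_pow_cases (k+1)
  unfold a ch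
  split
  · next h =>
    rw [show bigA φ (st φ β k) + 2 = bigA φ (st φ β k) + 1 + 1 by ring]
    exact uIcc_disjoint hσ
      (vv_step φ β hφpos k hA)
      (vv_step φ β hφpos k (show (1:ℤ) ≤ bigA φ (st φ β k) + 1 by omega))
      (vv_step φ β hφpos k (show (1:ℤ) ≤ bigA φ (st φ β k) + 1 + 1 by omega)) h
  · next h => exact h

include hα

lemma alpha_mem (k : ℕ) :
    α ∈ Set.uIcc (vv (st φ β k) (a φ β k)) (vv (st φ β k) (a φ β k + 1)) := by
  have p0 := qR_pos φ β hφpos k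
  have p1 := qR_pos φ β hφpos (k+1)
  have p2 := qR_pos φ β hφpos (k+2)
  have hv1 : vv (st φ β k) (a φ β k) = X φ β (k+1) := rfl
  -- the second endpoint
  have hm : vv (st φ β k) (a φ β k + 1)
      = (pR φ β (k+1) + pR φ β k) / (qR φ β (k+1) + qR φ β k) := by
    show (((a φ β k + 1) * p φ β k + P φ β k : ℤ):ℝ) / (((a φ β k + 1) * q φ β k + Q φ β k : ℤ):ℝ) = _
    have e1 : (a φ β k + 1) * p φ β k + P φ β k = p φ β (k+1) + p φ β k := by
      rw [p_succ]; ring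
    have e2 : (a φ β k + 1) * q φ β k + Q φ β k = q φ β (k+1) + q φ β k := by
      rw [q_succ]; ring
    rw [e1, e2]
    unfold pR qR
    push_cast
    ring
  have hdetR : pR φ β (k+1) * qR φ β k - pR φ β k * qR φ β (k+1) = (-1:ℝ)^k := by
    have := det' φ β k
    unfold pR qR; exact_mod_cast this
  have hw' : vv (st φ β k) (a φ β k + 1) - X φ β (k+1)
      = (-1:ℝ)^(k+1) * (1/(qR φ β (k+1) * (qR φ β (k+1) + qR φ β k))) := by
    rw [hm, X, div_sub_div _ _ (by positivity) (ne_of_gt p1)]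
    rw [show (pR φ β (k+1) + pR φ β k) * qR φ β (k+1)
        - (qR φ β (k+1) + qR φ β k) * pR φ β (k+1) = -((-1:ℝ)^k) by linear_combination -hdetR]
    rw [pow_succ]
    rw [div_eq_iff (by positivity)]
    field_simp
  have hw : vv (st φ β k) (a φ β k + 1)
      = X φ β (k+1) + (-1:ℝ)^(k+1) * (1/(qR φ β (k+1) * (qR φ β (k+1) + qR φ β k))) := by
    linarith [hw']
  have hαeq : α = X φ β (k+1) + (-1:ℝ)^(k+1) * u φ β α (k+1) := by
    have hsq := neg_one_sq_pow (k+1)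
    unfold u
    linear_combination (X φ β (k+1) - α) * hsq
  have hub : u φ β α (k+1) ≤ 1/(qR φ β (k+1) * (qR φ β (k+1) + qR φ β k)) := by
    have h1 := u_lt φ β hφpos α hα (k+1)
    have h2 : qR φ β (k+1) + qR φ β k ≤ qR φ β (k+2) := by
      have := qR_two_step φ β hφpos k
      linarith
    have h3 : 1/(qR φ β (k+1) * qR φ β (k+2)) ≤ 1/(qR φ β (k+1) * (qR φ β (k+1) + qR φ β k)) := by
      apply one_div_le_one_div_of_le (by positivity)
      nlinarith
    linarith
  rw [hv1, hw, hαeq]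
  exact mem_uIcc_of (neg_one_pow_cases (k+1)) (u_nonneg φ β hφpos α hα (k+1)) hub

lemma alpha_ne_beta (k : ℕ) : α ≠ β k := by
  intro h
  exact beta_not_mem φ β hφpos k (h ▸ alpha_mem φ β hφpos α hα k)

end dodge

lemma abs_add_ge {x y : ℝ} (h : 0 ≤ x * y) : |x| ≤ |x + y| := by
  nlinarith [abs_nonneg x, abs_nonneg (x+y), sq_abs x, sq_abs (x+y), sq_nonneg y]

section bestapprox

variable (hφpos : ∀ x : ℝ, 1 ≤ x → 0 < φ x) (α : ℝ)
    (hα : Tendsto (X φ β) atTop (𝓝 α))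

include hφpos hα

lemma best_approx (k : ℕ) (n d : ℤ) (hd : 0 < d) (hdlt : d < q φ β (k+1))
    (hne : ((n:ℝ)/(d:ℝ)) ≠ X φ β k) :
    qR φ β k * u φ β α k / (d:ℝ) ≤ |α - (n:ℝ)/(d:ℝ)| := by
  have hq0 := q_pos φ β hφpos k
  have hq1 := q_pos φ β hφpos (k+1)
  have p0 := qR_pos φ β hφpos k
  have p1 := qR_pos φ β hφpos (k+1)
  have hdR : (0:ℝ) < (d:ℝ) := by exact_mod_cast hd
  set s : ℤ := (-1)^k with hs_def
  have hs : s = 1 ∨ s = -1 := by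
    rcases Nat.even_or_odd k with h | h
    · exact Or.inl (by rw [hs_def]; exact h.neg_one_pow)
    · exact Or.inr (by rw [hs_def]; exact h.neg_one_pow)
  have hs2 : s * s = 1 := by rcases hs with h | h <;> rw [h] <;> norm_num
  have hdet : p φ β (k+1) * q φ β k - p φ β k * q φ β (k+1) = s := det' φ β k
  set lam : ℤ := s * (d * p φ β (k+1) - n * q φ β (k+1)) with hlam_def
  set mu : ℤ := s * (n * q φ β k - d * p φ β k) with hmu_def
  have hn : n = lam * p φ β k + mu * p φ β (k+1) := by
    rw [hlam_def, hmu_def]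
    linear_combination (-(s*n)) * hdet + (-n) * hs2
  have hd' : d = lam * q φ β k + mu * q φ β (k+1) := by
    rw [hlam_def, hmu_def]
    linear_combination (-(s*d)) * hdet + (-d) * hs2
  by_cases hmu : mu = 0
  · -- then n/d = X k, contradiction
    exfalso
    apply hne
    have hfrac : n * q φ β k = d * p φ β k := by
      have h0 : s * (n * q φ β k - d * p φ β k) = 0 := by rw [← hmu_def, hmu]
      rcases hs with h | h <;> rw [h] at h0 <;> omega
    have hfracR : (n:ℝ) * qR φ β k = (d:ℝ) * pR φ β k := by
      unfold qR pR; exact_mod_cast hfrac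
    rw [X, div_eq_div_iff hdR.ne' p0.ne']
    linarith [hfracR]
  by_cases hlam : lam = 0
  · exfalso
    have hd'' : d = mu * q φ β (k+1) := by rw [hd', hlam]; ring
    have hmu1 : 1 ≤ mu ∨ mu ≤ -1 := by omega
    rcases hmu1 with h | h
    · nlinarith
    · nlinarith
  -- main case
  have hlm : lam * mu ≤ -1 := by
    rcases lt_trichotomy lam 0 with hl | hl | hl
    · rcases lt_trichotomy mu 0 with hm | hm | hm
      · exfalso; nlinarith
      · exact absurd hm hmu
      · nlinarith
    · exact absurd hl hlam
    · rcases lt_trichotomy mu 0 with hm | hm | hm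
      · nlinarith
      · exact absurd hm hmu
      · exfalso; nlinarith
  have hnR : (n:ℝ) = (lam:ℝ) * pR φ β k + (mu:ℝ) * pR φ β (k+1) := by
    unfold pR; exact_mod_cast hn
  have hdRR : (d:ℝ) = (lam:ℝ) * qR φ β k + (mu:ℝ) * qR φ β (k+1) := by
    unfold qR; exact_mod_cast hd'
  have hkey : (d:ℝ)*α - n
      = (lam:ℝ)*(qR φ β k * α - pR φ β k) + (mu:ℝ)*(qR φ β (k+1) * α - pR φ β (k+1)) := by
    linear_combination α * hdRR - hnR
  have hsqR := neg_one_sq_pow k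
  have epk : pR φ β k = qR φ β k * X φ β k := by
    rw [X]; field_simp
  have epk1 : pR φ β (k+1) = qR φ β (k+1) * X φ β (k+1) := by
    rw [X]; field_simp
  have e1 : qR φ β k * α - pR φ β k = qR φ β k * ((-1:ℝ)^k * u φ β α k) := by
    rw [epk]
    unfold u
    linear_combination (qR φ β k * (X φ β k - α)) * hsqR
  have e2 : qR φ β (k+1) * α - pR φ β (k+1)
      = qR φ β (k+1) * ((-1:ℝ)^(k+1) * u φ β α (k+1)) := by
    rw [epk1]
    unfold u
    linear_combination (qR φ β (k+1) * (X φ β (k+1) - α)) * (neg_one_sq_pow (k+1))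
  have hσσ' : (-1:ℝ)^k * (-1:ℝ)^(k+1) = -1 := by
    rw [pow_succ]
    linear_combination (-1) * hsqR
  have hu0 := u_pos φ β hφpos α hα k
  have hu1 := u_pos φ β hφpos α hα (k+1)
  have hXY : 0 ≤ ((lam:ℝ)*(qR φ β k * α - pR φ β k)) * ((mu:ℝ)*(qR φ β (k+1) * α - pR φ β (k+1))) := by
    have hprod : ((lam:ℝ)*(qR φ β k * α - pR φ β k)) * ((mu:ℝ)*(qR φ β (k+1) * α - pR φ β (k+1)))
        = (-((lam:ℝ)*(mu:ℝ))) * (qR φ β k * qR φ β (k+1) * (u φ β α k * u φ β α (k+1))) := by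
      rw [e1, e2]
      linear_combination ((lam:ℝ)*(mu:ℝ)*qR φ β k*qR φ β (k+1)*(u φ β α k)*(u φ β α (k+1))) * hσσ'
    rw [hprod]
    have hlmR : ((lam:ℝ)*(mu:ℝ)) ≤ -1 := by exact_mod_cast hlm
    have hrest : 0 ≤ qR φ β k * qR φ β (k+1) * (u φ β α k * u φ β α (k+1)) := by positivity
    nlinarith
  have habs1 : qR φ β k * u φ β α k ≤ |(lam:ℝ)*(qR φ β k * α - pR φ β k)| := by
    rw [abs_mul]
    have hlam1 : (1:ℝ) ≤ |(lam:ℝ)| := by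
      have h1 : 1 ≤ |lam| := Int.one_le_abs hlam
      exact_mod_cast h1
    have habs2 : |qR φ β k * α - pR φ β k| = qR φ β k * u φ β α k := by
      have : qR φ β k * α - pR φ β k = qR φ β k * (α - X φ β k) := by
        rw [epk]; ring
      rw [this, abs_mul, abs_of_pos p0, abs_sub_eq_u φ β hφpos α hα k]
    rw [habs2]
    have hmm := mul_le_mul_of_nonneg_right hlam1 (le_of_lt (mul_pos p0 hu0))
    nlinarith [hmm]
  have habs3 : qR φ β k * u φ β α k ≤ |(d:ℝ)*α - n| := by
    rw [hkey]
    exact le_trans habs1 (abs_add_ge hXY)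
  have hfinal : |α - (n:ℝ)/(d:ℝ)| = |(d:ℝ)*α - n| / (d:ℝ) := by
    rw [show α - (n:ℝ)/(d:ℝ) = ((d:ℝ)*α - n)/(d:ℝ) by field_simp]
    rw [abs_div, abs_of_pos hdR]
  rw [hfinal]
  gcongr

end bestapprox

section assembly

variable (hφpos : ∀ x : ℝ, 1 ≤ x → 0 < φ x)

lemma conv_coprime (k : ℕ) :
    Nat.Coprime (p φ β k).natAbs (q φ β k).natAbs :=
  Int.isCoprime_iff_gcd_eq_one.mp (coprime_pq φ β k)

include hφpos in
lemma conv_den (k : ℕ) :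
    ((((p φ β k : ℚ) / (q φ β k : ℚ)) : ℚ).den : ℤ) = q φ β k :=
  Rat.den_div_eq_of_coprime (q_pos φ β hφpos k) (conv_coprime φ β k)

lemma conv_cast (k : ℕ) :
    ((((p φ β k : ℚ) / (q φ β k : ℚ)) : ℚ) : ℝ) = X φ β k := by
  unfold X pR qR
  push_cast
  rfl

include hφpos in
lemma qR_tendsto : Tendsto (fun N => qR φ β N) atTop atTop := by
  apply tendsto_atTop_mono (f := fun N : ℕ => (N : ℝ) - 1)
  · intro N
    cases N with
    | zero => simpa using (qR_ge_one φ β hφpos 0).trans' (by norm_num)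
    | succ N =>
      have h1 := q_ge φ β hφpos N
      have h2 : (N : ℝ) ≤ qR φ β (N+1) := by unfold qR; exact_mod_cast h1
      push_cast
      linarith
  · exact tendsto_atTop_add_const_right atTop (-1) tendsto_natCast_atTop_atTop

include hφpos in
lemma KK_tendsto (hlim : Tendsto (fun x : ℝ => x ^ 2 * φ x) atTop (𝓝 0)) :
    Tendsto (fun k => KK φ (q φ β k)) atTop atTop := by
  have hcomp : Tendsto (fun k => (qR φ β k) ^ 2 * φ (qR φ β k)) atTop (𝓝 0) :=
    hlim.comp (qR_tendsto φ β hφpos)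
  have hpos : ∀ k : ℕ, 0 < (qR φ β k) ^ 2 * φ (qR φ β k) := by
    intro k
    have h1 := qR_ge_one φ β hφpos k
    have h2 := hφpos _ h1
    positivity
  have hwithin : Tendsto (fun k => (qR φ β k) ^ 2 * φ (qR φ β k)) atTop (𝓝[>] 0) :=
    tendsto_nhdsWithin_of_tendsto_nhds_of_eventually_within _ hcomp
      (Eventually.of_forall hpos)
  have := hwithin.inv_tendsto_nhdsGT_zero
  apply this.congr
  intro k
  simp [KK, qR, one_div]

include hφpos in
lemma exists_k (k₀ : ℕ) {d : ℤ} (hd : q φ β k₀ ≤ d) :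
    ∃ k, k₀ ≤ k ∧ q φ β k ≤ d ∧ d < q φ β (k + 1) := by
  have hd1 : 1 ≤ d := le_trans (q_pos φ β hφpos k₀) hd
  have hex : ∃ j, d < q φ β j := by
    refine ⟨d.toNat + 1 + 1, ?_⟩
    have h1 := q_ge φ β hφpos (d.toNat + 1)
    have h2 : ((d.toNat + 1 : ℕ) : ℤ) = d + 1 := by
      push_cast
      rw [Int.toNat_of_nonneg (by omega)]
    omega
  classical
  let J := Nat.find hex
  have hJ : d < q φ β J := Nat.find_spec hex
  have hJmin : ∀ m, m < J → ¬ d < q φ β m := fun m hm => Nat.find_min hex hm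
  have hJk₀ : k₀ < J := by
    by_contra hcon
    push_neg at hcon
    have := q_mono φ β hφpos hcon
    omega
  obtain ⟨k, hk⟩ : ∃ k, J = k + 1 := ⟨J - 1, by omega⟩
  refine ⟨k, by omega, ?_, by rw [← hk]; exact hJ⟩
  have := hJmin k (by omega)
  omega

lemma finite_aux (N : ℤ) (B : ℝ) (hN : 0 < N) (hB : 0 ≤ B) :
    {r : ℚ | (r.den : ℤ) ≤ N ∧ |(r : ℝ)| ≤ B}.Finite := by
  classical
  set M : ℤ := ⌈(N : ℝ) * B⌉ with hM
  apply Set.Finite.of_finite_image (f := fun r : ℚ => (r.num, (r.den : ℤ)))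
  · apply Set.Finite.subset ((Set.finite_Icc (-M) M).prod (Set.finite_Icc (0:ℤ) N))
    rintro x ⟨r, ⟨hden, habs⟩, rfl⟩
    have hdenpos : (0:ℝ) < (r.den:ℝ) := by exact_mod_cast r.pos
    have hnum : |(r.num:ℝ)| ≤ (N:ℝ) * B := by
      have hcast : |(r:ℝ)| = |(r.num:ℝ)| / (r.den:ℝ) := by
        rw [Rat.cast_def, abs_div, abs_of_pos hdenpos]
      rw [hcast, div_le_iff₀ hdenpos] at habs
      have hdle : (r.den:ℝ) ≤ (N:ℝ) := by exact_mod_cast hden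
      nlinarith [abs_nonneg ((r.num:ℝ))]
    have hceil : (N:ℝ) * B ≤ (M:ℝ) := Int.le_ceil _
    rw [Set.mem_prod]
    constructor
    · rw [Set.mem_Icc]
      rw [abs_le] at hnum
      constructor
      · have : -(M:ℝ) ≤ (r.num:ℝ) := by linarith
        exact_mod_cast this
      · have : (r.num:ℝ) ≤ (M:ℝ) := by linarith
        exact_mod_cast this
    · rw [Set.mem_Icc]
      exact ⟨by positivity, hden⟩
  · intro r1 _ r2 _ h
    have h1 : r1.num = r2.num := congrArg Prod.fst h
    have h2 : (r1.den : ℤ) = (r2.den : ℤ) := congrArg Prod.snd h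
    have h3 : r1.den = r2.den := by exact_mod_cast h2
    exact Rat.ext h1 h3

include hφpos in
lemma phi_anti (hmono : ∀ x y : ℝ, 1 ≤ x → x ≤ y → y ^ 2 * φ y ≤ x ^ 2 * φ x)
    {x y : ℝ} (hx : 1 ≤ x) (hxy : x ≤ y) : φ y ≤ φ x := by
  have h := hmono x y hx hxy
  have hφx := hφpos x hx
  have hy : (1:ℝ) ≤ y := hx.trans hxy
  have hx0 : (0:ℝ) < x := by linarith
  have hy0 : (0:ℝ) < y := by linarith
  have hφy := hφpos y hy
  have hxy2 : x^2 ≤ y^2 := by nlinarith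
  nlinarith [mul_pos hy0 hy0]

end assembly

section uanti

variable (φ : ℝ → ℝ) (β : ℕ → ℝ) (hφpos : ∀ x : ℝ, 1 ≤ x → 0 < φ x) (α : ℝ)
    (hα : Tendsto (X φ β) atTop (𝓝 α))

include hφpos hα

lemma u_anti : StrictAnti (u φ β α) := by
  apply strictAnti_nat_of_succ_lt
  intro k
  have h1 := u_add φ β hφpos α k
  have h2 := u_lt φ β hφpos α hα (k+1)
  have p0 := qR_pos φ β hφpos k
  have p1 := qR_pos φ β hφpos (k+1)
  have p2 := qR_pos φ β hφpos (k+2)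
  have hmono1 : qR φ β k ≤ qR φ β (k+1) := qR_mono φ β hφpos (by omega)
  have hts := qR_two_step φ β hφpos k
  have hq2 : 2 * (qR φ β k * qR φ β (k+1)) ≤ qR φ β (k+1) * qR φ β (k+2) := by nlinarith
  have h3 : 1/(qR φ β (k+1) * qR φ β (k+2)) ≤ 1/(2 * (qR φ β k * qR φ β (k+1))) :=
    one_div_le_one_div_of_le (by positivity) hq2
  have h4 : 1/(2 * (qR φ β k * qR φ β (k+1)))
      = (1/2) * (1/(qR φ β k * qR φ β (k+1))) := by ring
  linarith

end uanti

end Approx5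

set_option maxHeartbeats 1000000 in
open Approx5 in
/-- Theorem 5: if `x ↦ x² φ(x)` is non-increasing on `[1, ∞)` and tends to `0` at infinity,
then there is a transcendental real number `α` which is approximable at order `φ` but, for
every `0 < c < 1`, not approximable at order `c·φ`. -/
theorem statement5 (φ : ℝ → ℝ) (hφpos : ∀ x : ℝ, 1 ≤ x → 0 < φ x)
    (hmono : ∀ x y : ℝ, 1 ≤ x → x ≤ y → y ^ 2 * φ y ≤ x ^ 2 * φ x)
    (hlim : Tendsto (fun x : ℝ => x ^ 2 * φ x) atTop (𝓝 0)) :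
    ∃ α : ℝ, Transcendental ℚ α ∧
      {r : ℚ | ∃ p q : ℤ, 0 < q ∧ r = (p : ℚ) / q ∧ |α - (r : ℝ)| < φ q}.Infinite ∧
      ∀ c : ℝ, 0 < c → c < 1 →
        {r : ℚ | ∃ p q : ℤ, 0 < q ∧ r = (p : ℚ) / q ∧ |α - (r : ℝ)| < c * φ q}.Finite := by
  classical
  have hcnt : Set.Countable {x : ℝ | IsAlgebraic ℚ x} := Algebraic.countable ℚ ℝ
  obtain ⟨β, hβ⟩ := hcnt.exists_eq_range ⟨0, isAlgebraic_zero⟩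
  obtain ⟨α, hα⟩ := cauchySeq_tendsto_of_complete (Approx5.cauchy φ β hφpos)
  have hq_posZ : ∀ k, (0:ℤ) < Approx5.q φ β k := fun k =>
    lt_of_lt_of_le zero_lt_one (Approx5.q_pos φ β hφpos k)
  refine ⟨α, ?_, ?_, ?_⟩
  · -- transcendental
    intro halg
    have hmem : α ∈ Set.range β := by rw [← hβ]; exact halg
    obtain ⟨k, hk⟩ := hmem
    exact Approx5.alpha_ne_beta φ β hφpos α hα k hk.symm
  · -- infinitely many good approximations
    have hinj : Function.Injective
        (fun k : ℕ => ((Approx5.p φ β k : ℚ) / (Approx5.q φ β k : ℚ) : ℚ)) := by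
      intro j k hjk
      simp only at hjk
      have hXeq : Approx5.X φ β j = Approx5.X φ β k := by
        rw [← Approx5.conv_cast φ β j, ← Approx5.conv_cast φ β k, hjk]
      have hu : Approx5.u φ β α j = Approx5.u φ β α k := by
        rw [← Approx5.abs_sub_eq_u φ β hφpos α hα j,
          ← Approx5.abs_sub_eq_u φ β hφpos α hα k, hXeq]
      exact (Approx5.u_anti φ β hφpos α hα).injective hu
    apply Set.infinite_of_injective_forall_mem hinj
    intro k
    refine ⟨Approx5.p φ β k, Approx5.q φ β k, hq_posZ k, rfl, ?_⟩
    rw [Approx5.conv_cast φ β k, Approx5.abs_sub_eq_u φ β hφpos α hα k]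
    exact Approx5.u_lt_phi φ β hφpos α hα k
  · -- finiteness
    intro c hc0 hc1
    have h1c : (0:ℝ) < 1 - c := by linarith
    obtain ⟨k₀, hk₀⟩ := eventually_atTop.mp
      ((Approx5.KK_tendsto φ β hφpos hlim).eventually_ge_atTop (5/(1-c)))
    have hφ1 : 0 < φ 1 := hφpos 1 le_rfl
    apply Set.Finite.subset
      (Approx5.finite_aux (Approx5.q φ β k₀) (|α| + φ 1) (hq_posZ k₀) (by positivity))
    rintro r ⟨pp, qq, hqq, hreq, habs⟩
    have hdvd : ((r.den:ℤ)) ∣ qq := by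
      have h := Rat.den_dvd pp qq
      rw [Rat.divInt_eq_div, ← hreq] at h
      exact h
    have hden1 : (1:ℤ) ≤ (r.den:ℤ) := by exact_mod_cast r.pos
    have hdenle : (r.den:ℤ) ≤ qq := Int.le_of_dvd hqq hdvd
    have hdenR1 : (1:ℝ) ≤ ((r.den:ℤ):ℝ) := by exact_mod_cast hden1
    have hdenRpos : (0:ℝ) < ((r.den:ℤ):ℝ) := by linarith
    have hqq1 : (1:ℝ) ≤ ((qq:ℤ):ℝ) := by exact_mod_cast hqq
    have hφqq : 0 < φ ((qq:ℤ):ℝ) := hφpos _ hqq1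
    have hphile : φ ((qq:ℤ):ℝ) ≤ φ ((r.den:ℤ):ℝ) :=
      Approx5.phi_anti φ hφpos hmono hdenR1 (by exact_mod_cast hdenle)
    have habs' : |α - (r:ℝ)| < c * φ ((r.den:ℤ):ℝ) :=
      lt_of_lt_of_le habs (by nlinarith)
    constructor
    · -- denominator bound
      by_contra hcon
      push_neg at hcon
      obtain ⟨k, hkk₀, hqle, hqlt⟩ :=
        Approx5.exists_k φ β hφpos k₀ (d := (r.den:ℤ)) hcon.le
      have hKk := hk₀ k hkk₀
      have hKpos := Approx5.KK_pos φ hφpos (Approx5.q_pos φ β hφpos k)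
      have hcK : c * (Approx5.KK φ (Approx5.q φ β k) + 5) ≤ Approx5.KK φ (Approx5.q φ β k) := by
        rw [div_le_iff₀ h1c] at hKk
        nlinarith
      have hqRle : Approx5.qR φ β k ≤ ((r.den:ℤ):ℝ) := by
        have : ((Approx5.q φ β k : ℤ):ℝ) ≤ ((r.den:ℤ):ℝ) := by exact_mod_cast hqle
        exact this
      have huc := Approx5.u_ge_c φ β hφpos α hα hc0 k hcK
      have hu0 := Approx5.u_pos φ β hφpos α hα k
      have hq1R := Approx5.qR_ge_one φ β hφpos k
      by_cases heq : ((r:ℝ)) = Approx5.X φ β k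
      · have hr_eq : r = ((Approx5.p φ β k : ℚ) / (Approx5.q φ β k : ℚ)) := by
          apply Rat.cast_injective (α := ℝ)
          rw [Approx5.conv_cast φ β k]
          exact heq
        have hdenq : (r.den:ℤ) = Approx5.q φ β k := by
          rw [hr_eq]; exact Approx5.conv_den φ β hφpos k
        have habs2 : |α - (r:ℝ)| = Approx5.u φ β α k := by
          rw [heq]; exact Approx5.abs_sub_eq_u φ β hφpos α hα k
        rw [habs2] at habs'
        have hdenReq : ((r.den:ℤ):ℝ) = Approx5.qR φ β k := by
          rw [hdenq]; rfl
        rw [hdenReq] at habs'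
        linarith
      · have hcastr : (r:ℝ) = (r.num:ℝ)/((r.den:ℤ):ℝ) := by
          rw [Rat.cast_def]
          push_cast
          ring
        have hne : ((r.num:ℝ)/((r.den:ℤ):ℝ)) ≠ Approx5.X φ β k := by
          rw [← hcastr]; exact heq
        have hba := Approx5.best_approx φ β hφpos α hα k r.num (r.den:ℤ)
          (by omega) hqlt hne
        rw [← hcastr] at hba
        have hm := hmono (Approx5.qR φ β k) ((r.den:ℤ):ℝ) hq1R hqRle
        have hφd := hφpos ((r.den:ℤ):ℝ) hdenR1
        have hφq := hφpos (Approx5.qR φ β k) hq1R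
        have hA : c * φ (((r.den:ℤ)):ℝ) * ((r.den:ℤ):ℝ)^2
            ≤ Approx5.qR φ β k^2 * Approx5.u φ β α k := by
          nlinarith [mul_le_mul_of_nonneg_left hm hc0.le,
            mul_le_mul_of_nonneg_left huc (sq_nonneg (Approx5.qR φ β k))]
        have hgoal : c * φ (((r.den:ℤ)):ℝ)
            ≤ Approx5.qR φ β k * Approx5.u φ β α k / ((r.den:ℤ):ℝ) := by
          rw [le_div_iff₀ hdenRpos]
          by_contra hno
          push_neg at hno
          have h5 := mul_lt_mul_of_pos_right hno hdenRpos
          have h6 : Approx5.qR φ β k^2 * Approx5.u φ β α k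
              ≤ Approx5.qR φ β k * ((r.den:ℤ):ℝ) * Approx5.u φ β α k := by
            nlinarith [mul_le_mul_of_nonneg_right
              (mul_le_mul_of_nonneg_left hqRle (by linarith : (0:ℝ) ≤ Approx5.qR φ β k)) hu0.le]
          nlinarith
        linarith
    · -- size bound
      have hphiqq1 : φ ((qq:ℤ):ℝ) ≤ φ 1 := Approx5.phi_anti φ hφpos hmono le_rfl hqq1
      have h0 : c * φ ((qq:ℤ):ℝ) ≤ φ 1 := by nlinarith [hφqq, hphiqq1]
      have h1 : |α - (r:ℝ)| ≤ φ 1 := le_trans habs.le h0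
      have h2 := abs_sub_abs_le_abs_sub (r:ℝ) α
      rw [abs_sub_comm] at h2
      linarith
end
end

section
/- Let α = [0; a₁, a₂, …] be the continued fraction of a sequence of positive integers, with convergents (p_m/q_m)_{m≥0}. If n ≥ 1 is such that the word a₁a₂…a_n is a palindrome (a_j = a_{n+1−j} for all 1 ≤ j ≤ n), then max{ |α − p_n/q_n|, |α² − p_{n−1}/q_n| } < (a₁ + 3)/q_n². -/
open Filter Topology

/-- Numerators of the convergents of `[0; a 1, a 2, ...]`. -/
def cfNum (a : ℕ → ℕ) : ℕ → ℕ
  | 0 => 0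
  | 1 => 1
  | n + 2 => a (n + 2) * cfNum a (n + 1) + cfNum a n

/-- Denominators of the convergents of `[0; a 1, a 2, ...]`. -/
def cfDen (a : ℕ → ℕ) : ℕ → ℕ
  | 0 => 1
  | 1 => a 1
  | n + 2 => a (n + 2) * cfDen a (n + 1) + cfDen a n

namespace Cf13
open Matrix

def Mk (k : ℕ) : Matrix (Fin 2) (Fin 2) ℕ := !![k, 1; 1, 0]

def P (a : ℕ → ℕ) : ℕ → Matrix (Fin 2) (Fin 2) ℕ
  | 0 => 1
  | m + 1 => P a m * Mk (a (m + 1))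

def Q (a : ℕ → ℕ) : ℕ → Matrix (Fin 2) (Fin 2) ℕ
  | 0 => 1
  | m + 1 => Mk (a (m + 1)) * Q a m

lemma P_eq (a : ℕ → ℕ) : ∀ m, P a (m + 1) =
    !![cfDen a (m + 1), cfDen a m; cfNum a (m + 1), cfNum a m]
  | 0 => by
    show (1 : Matrix (Fin 2) (Fin 2) ℕ) * Mk (a 1) = _
    rw [Matrix.one_mul]
    simp [Mk, cfDen, cfNum]
  | m + 1 => by
    show P a (m + 1) * Mk (a (m + 2)) = _
    rw [P_eq a m]
    simp [Mk, Matrix.mul_fin_two, cfDen, cfNum, Nat.mul_comm]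

lemma P_congr (a b : ℕ → ℕ) : ∀ m, (∀ j, 1 ≤ j → j ≤ m → a j = b j) → P a m = P b m
  | 0, _ => rfl
  | m + 1, h => by
    show P a m * Mk (a (m+1)) = P b m * Mk (b (m+1))
    rw [P_congr a b m (fun j h1 h2 => h j h1 (by omega)), h (m+1) (by omega) le_rfl]

lemma P_cons (c : ℕ → ℕ) : ∀ m, P c (m + 1) = Mk (c 1) * P (fun j => c (j + 1)) m
  | 0 => by
    show (1 : Matrix (Fin 2) (Fin 2) ℕ) * Mk (c 1) = Mk (c 1) * 1
    rw [Matrix.one_mul, Matrix.mul_one]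
  | m + 1 => by
    show P c (m + 1) * Mk (c (m + 2)) = Mk (c 1) * (P (fun j => c (j+1)) m * Mk (c (m + 2)))
    rw [P_cons c m, Matrix.mul_assoc]

lemma Q_rev (a : ℕ → ℕ) : ∀ m, Q a m = P (fun j => a (m + 1 - j)) m
  | 0 => rfl
  | m + 1 => by
    show Mk (a (m + 1)) * Q a m = _
    rw [Q_rev a m, P_cons]
    congr 1
    exact P_congr _ _ m (fun j h1 h2 => congrArg a (by omega))

lemma Q_transpose (a : ℕ → ℕ) : ∀ m, Q a m = (P a m)ᵀ
  | 0 => by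
    show (1 : Matrix (Fin 2) (Fin 2) ℕ) = (1 : Matrix (Fin 2) (Fin 2) ℕ)ᵀ
    rw [Matrix.transpose_one]
  | m + 1 => by
    show Mk (a (m + 1)) * Q a m = (P a m * Mk (a (m + 1)))ᵀ
    rw [Matrix.transpose_mul, Q_transpose a m]
    congr 1
    ext i j
    fin_cases i <;> fin_cases j <;> rfl


lemma pal_eq (a : ℕ → ℕ) (m : ℕ)
    (hpal : ∀ j, 1 ≤ j → j ≤ m + 1 → a j = a (m + 1 + 1 - j)) :
    cfNum a (m + 1) = cfDen a m := by
  have h1 : Q a (m + 1) = P a (m + 1) := by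
    rw [Q_rev]
    exact P_congr _ _ (m + 1) (fun j hj1 hj2 => (hpal j hj1 hj2).symm)
  have h2 := Q_transpose a (m + 1)
  have h3 : P a (m + 1) = (P a (m + 1))ᵀ := h1.symm.trans h2
  have h4 := congrFun (congrFun h3 1) 0
  rw [P_eq a m] at h4
  simpa [Matrix.transpose_apply] using h4

lemma den_pos (a : ℕ → ℕ) (ha : ∀ m, 1 ≤ m → 1 ≤ a m) : ∀ m, 1 ≤ cfDen a m
  | 0 => le_refl 1
  | 1 => ha 1 le_rfl
  | m + 2 => by
    have h1 := den_pos a ha (m + 1)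
    have h2 := ha (m + 2) (by omega)
    show 1 ≤ a (m + 2) * cfDen a (m + 1) + cfDen a m
    calc 1 ≤ a (m + 2) * cfDen a (m + 1) := Nat.one_le_iff_ne_zero.mpr (by positivity)
    _ ≤ _ := Nat.le_add_right _ _

lemma num_le_den (a : ℕ → ℕ) (ha : ∀ m, 1 ≤ m → 1 ≤ a m) : ∀ m, cfNum a m ≤ cfDen a m
  | 0 => by simp [cfNum, cfDen]
  | 1 => ha 1 le_rfl
  | m + 2 => by
    have h1 := num_le_den a ha (m + 1)
    have h2 := num_le_den a ha m
    show a (m + 2) * cfNum a (m + 1) + cfNum a m ≤ a (m + 2) * cfDen a (m + 1) + cfDen a m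
    exact Nat.add_le_add (Nat.mul_le_mul_left _ h1) h2

lemma det_eq (a : ℕ → ℕ) : ∀ m,
    (cfNum a (m + 1) : ℤ) * cfDen a m - cfNum a m * cfDen a (m + 1) = (-1) ^ m
  | 0 => by simp [cfNum, cfDen]
  | m + 1 => by
    have ih := det_eq a m
    show (↑(a (m + 2) * cfNum a (m + 1) + cfNum a m) : ℤ) * cfDen a (m + 1)
        - cfNum a (m + 1) * ↑(a (m + 2) * cfDen a (m + 1) + cfDen a m) = (-1) ^ (m + 1)
    push_cast
    ring_nf
    ring_nf at ih
    linarith [ih]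

noncomputable def d (a : ℕ → ℕ) (m : ℕ) : ℝ := (cfNum a m : ℝ) / cfDen a m

lemma denR_pos (a : ℕ → ℕ) (ha : ∀ m, 1 ≤ m → 1 ≤ a m) (m : ℕ) :
    (0 : ℝ) < cfDen a m := by exact_mod_cast den_pos a ha m

lemma d_diff (a : ℕ → ℕ) (ha : ∀ m, 1 ≤ m → 1 ≤ a m) (m : ℕ) :
    d a (m + 1) - d a m = (-1) ^ m / ((cfDen a m : ℝ) * cfDen a (m + 1)) := by
  have h1 := denR_pos a ha m
  have h2 := denR_pos a ha (m + 1)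
  have hd : (cfNum a (m + 1) : ℝ) * cfDen a m - cfNum a m * cfDen a (m + 1) = (-1) ^ m := by
    exact_mod_cast det_eq a m
  rw [d, d]
  field_simp
  linear_combination hd

lemma den_le_two_step (a : ℕ → ℕ) (m : ℕ) : (cfDen a m : ℝ) ≤ cfDen a (m + 2) := by
  have : cfDen a m ≤ a (m + 2) * cfDen a (m + 1) + cfDen a m := Nat.le_add_left _ _
  exact_mod_cast this

lemma d_step_mem (a : ℕ → ℕ) (ha : ∀ m, 1 ≤ m → 1 ≤ a m) (m : ℕ) :
    d a (m + 2) ∈ Set.uIcc (d a m) (d a (m + 1)) := by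
  have q0 := denR_pos a ha m
  have q1 := denR_pos a ha (m + 1)
  have q2 := denR_pos a ha (m + 2)
  have hqle := den_le_two_step a m
  have e1 := d_diff a ha m
  have e2 := d_diff a ha (m + 1)
  have hfrac : (1 : ℝ) / ((cfDen a (m + 1) : ℝ) * cfDen a (m + 2))
      ≤ 1 / ((cfDen a m : ℝ) * cfDen a (m + 1)) := by
    apply one_div_le_one_div_of_le (by positivity)
    calc (cfDen a m : ℝ) * cfDen a (m + 1) ≤ (cfDen a (m + 2) : ℝ) * cfDen a (m + 1) := by
          apply mul_le_mul_of_nonneg_right hqle q1.le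
      _ = (cfDen a (m + 1) : ℝ) * cfDen a (m + 2) := by ring
  have hposA : (0:ℝ) < 1 / ((cfDen a m : ℝ) * cfDen a (m + 1)) := by positivity
  have hposB : (0:ℝ) < 1 / ((cfDen a (m + 1) : ℝ) * cfDen a (m + 2)) := by positivity
  rw [Set.mem_uIcc]
  rcases Nat.even_or_odd m with he | ho
  · rw [he.neg_one_pow] at e1
    rw [(he.add_one).neg_one_pow] at e2
    rw [neg_div] at e2
    left
    constructor <;> linarith
  · rw [ho.neg_one_pow] at e1
    rw [(Odd.add_one ho).neg_one_pow] at e2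
    rw [neg_div] at e1
    right
    constructor <;> linarith

lemma uIcc_nested (a : ℕ → ℕ) (ha : ∀ m, 1 ≤ m → 1 ≤ a m) (N : ℕ) :
    ∀ k, Set.uIcc (d a (N + k)) (d a (N + k + 1)) ⊆ Set.uIcc (d a N) (d a (N + 1))
  | 0 => subset_rfl
  | k + 1 => by
    refine subset_trans ?_ (uIcc_nested a ha N k)
    apply Set.uIcc_subset_uIcc
    · exact Set.right_mem_uIcc
    · exact d_step_mem a ha (N + k)

lemma d_mem (a : ℕ → ℕ) (ha : ∀ m, 1 ≤ m → 1 ≤ a m) (N m : ℕ) (h : N ≤ m) :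
    d a m ∈ Set.uIcc (d a N) (d a (N + 1)) := by
  obtain ⟨k, rfl⟩ := Nat.exists_eq_add_of_le h
  exact uIcc_nested a ha N k Set.left_mem_uIcc

lemma alpha_mem (a : ℕ → ℕ) (ha : ∀ m, 1 ≤ m → 1 ≤ a m) (α : ℝ)
    (hα : Filter.Tendsto (fun m => (cfNum a m : ℝ) / cfDen a m) Filter.atTop (nhds α))
    (N : ℕ) : α ∈ Set.uIcc (d a N) (d a (N + 1)) := by
  have hcl : IsClosed (Set.uIcc (d a N) (d a (N + 1))) := isClosed_Icc
  exact hcl.mem_of_tendsto hα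
    (Filter.eventually_atTop.mpr ⟨N, fun m hm => d_mem a ha N m hm⟩)

end Cf13

/-- If the word `a₁ a₂ … a_n` is a palindrome, then
`max { |α - p_n/q_n|, |α² - p_{n-1}/q_n| } < (a₁ + 3)/q_n²`. -/
theorem statement13 (a : ℕ → ℕ) (ha : ∀ m, 1 ≤ m → 1 ≤ a m)
    (α : ℝ)
    (hα : Tendsto (fun m => (cfNum a m : ℝ) / cfDen a m) atTop (𝓝 α))
    (n : ℕ) (hn : 1 ≤ n)
    (hpal : ∀ j, 1 ≤ j → j ≤ n → a j = a (n + 1 - j)) :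
    max |α - (cfNum a n : ℝ) / cfDen a n| |α ^ 2 - (cfNum a (n - 1) : ℝ) / cfDen a n| <
      ((a 1 : ℝ) + 3) / (cfDen a n : ℝ) ^ 2 := by

  obtain ⟨m, rfl⟩ : ∃ m, n = m + 1 := ⟨n - 1, by omega⟩
  simp only [Nat.add_sub_cancel]
  have hq : ∀ k, (0 : ℝ) < cfDen a k := Cf13.denR_pos a ha
  have hqn := hq (m + 1)
  have ha1 : (1 : ℝ) ≤ a 1 := by exact_mod_cast ha 1 le_rfl
  -- bounds on α
  have hα01 := Cf13.alpha_mem a ha α hα 0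
  have hd0 : Cf13.d a 0 = 0 := by simp [Cf13.d, cfNum, cfDen]
  have hd1nonneg : 0 ≤ Cf13.d a 1 := by
    rw [Cf13.d]
    positivity
  have hd1le : Cf13.d a 1 ≤ 1 := by
    rw [Cf13.d, div_le_one (hq 1)]
    exact_mod_cast Cf13.num_le_den a ha 1
  have hα0 : 0 ≤ α ∧ α ≤ 1 := by
    rcases Set.mem_uIcc.mp hα01 with ⟨h1, h2⟩ | ⟨h1, h2⟩ <;>
      rw [hd0] at * <;> constructor <;> linarith
  -- closeness of α to d (m+1)
  have hmem := Cf13.alpha_mem a ha α hα (m + 1)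
  have hdiff := Cf13.d_diff a ha (m + 1)
  have hgap : |Cf13.d a (m + 2) - Cf13.d a (m + 1)|
      = 1 / ((cfDen a (m + 1) : ℝ) * cfDen a (m + 2)) := by
    rw [hdiff, abs_div, abs_pow, abs_neg, abs_one, one_pow,
      abs_of_pos (mul_pos (hq (m+1)) (hq (m+2)))]
  have hclose : |α - Cf13.d a (m + 1)| ≤ 1 / ((cfDen a (m + 1) : ℝ) * cfDen a (m + 2)) := by
    rw [← hgap]
    have hy1 := le_abs_self (Cf13.d a (m + 2) - Cf13.d a (m + 1))
    have hy2 := neg_abs_le (Cf13.d a (m + 2) - Cf13.d a (m + 1))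
    have hy0 := abs_nonneg (Cf13.d a (m + 2) - Cf13.d a (m + 1))
    rcases Set.mem_uIcc.mp hmem with ⟨h1, h2⟩ | ⟨h1, h2⟩ <;>
      rw [abs_le] <;> constructor <;> linarith
  have hq12 : (cfDen a (m + 1) : ℝ) ≤ cfDen a (m + 2) := by
    have h2 := ha (m + 2) (by omega)
    have : cfDen a (m + 1) ≤ a (m + 2) * cfDen a (m + 1) + cfDen a m := by
      nlinarith [Cf13.den_pos a ha m, Cf13.den_pos a ha (m + 1)]
    exact_mod_cast this
  have hclose2 : |α - Cf13.d a (m + 1)| ≤ 1 / (cfDen a (m + 1) : ℝ) ^ 2 := by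
    refine hclose.trans ?_
    rw [sq]
    exact one_div_le_one_div_of_le (by positivity)
      (mul_le_mul_of_nonneg_left hq12 hqn.le)
  have hdn1 : Cf13.d a (m + 1) ≤ 1 := by
    rw [Cf13.d, div_le_one hqn]
    exact_mod_cast Cf13.num_le_den a ha (m + 1)
  have hdn0 : 0 ≤ Cf13.d a (m + 1) := by rw [Cf13.d]; positivity
  -- palindrome + determinant
  have hpq : cfNum a (m + 1) = cfDen a m := Cf13.pal_eq a m hpal
  have hdR : (cfNum a (m + 1) : ℝ) * cfDen a m - cfNum a m * cfDen a (m + 1) = (-1) ^ m := by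
    exact_mod_cast Cf13.det_eq a m
  have hpqR : (cfDen a m : ℝ) = cfNum a (m + 1) := by exact_mod_cast hpq.symm
  rw [hpqR] at hdR
  have hkey : (cfNum a m : ℝ) / cfDen a (m + 1)
      = ((cfNum a (m + 1) : ℝ) ^ 2 - (-1) ^ m) / (cfDen a (m + 1) : ℝ) ^ 2 := by
    rw [div_eq_div_iff hqn.ne' (pow_pos hqn 2).ne']
    linear_combination (-(cfDen a (m + 1) : ℝ)) * hdR
  have hsecond : |α ^ 2 - (cfNum a m : ℝ) / cfDen a (m + 1)|
      ≤ 3 / (cfDen a (m + 1) : ℝ) ^ 2 := by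
    rw [hkey]
    have e1 : α ^ 2 - ((cfNum a (m + 1) : ℝ) ^ 2 - (-1) ^ m) / (cfDen a (m + 1) : ℝ) ^ 2
        = (α - Cf13.d a (m + 1)) * (α + Cf13.d a (m + 1))
          + (-1) ^ m / (cfDen a (m + 1) : ℝ) ^ 2 := by
      rw [Cf13.d]
      field_simp
      ring
    rw [e1]
    have h2 : |(α - Cf13.d a (m + 1)) * (α + Cf13.d a (m + 1))|
        ≤ (1 / (cfDen a (m + 1) : ℝ) ^ 2) * 2 := by
      rw [abs_mul]
      apply mul_le_mul hclose2 ?_ (abs_nonneg _) (by positivity)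
      rw [abs_le]
      constructor <;> linarith [hα0.1, hα0.2]
    have h3 : |(-1 : ℝ) ^ m / (cfDen a (m + 1) : ℝ) ^ 2|
        = 1 / (cfDen a (m + 1) : ℝ) ^ 2 := by
      rw [abs_div, abs_pow, abs_neg, abs_one, one_pow,
        abs_of_pos (pow_pos hqn 2)]
    calc |(α - Cf13.d a (m + 1)) * (α + Cf13.d a (m + 1))
          + (-1) ^ m / (cfDen a (m + 1) : ℝ) ^ 2|
        ≤ |(α - Cf13.d a (m + 1)) * (α + Cf13.d a (m + 1))|
          + |(-1 : ℝ) ^ m / (cfDen a (m + 1) : ℝ) ^ 2| := abs_add_le _ _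
      _ ≤ 3 / (cfDen a (m + 1) : ℝ) ^ 2 := by
          rw [h3]
          have he : 1 / (cfDen a (m + 1) : ℝ) ^ 2 * 2 + 1 / (cfDen a (m + 1) : ℝ) ^ 2
              = 3 / (cfDen a (m + 1) : ℝ) ^ 2 := by ring
          linarith
  apply max_lt
  · calc |α - (cfNum a (m + 1) : ℝ) / cfDen a (m + 1)| ≤ 1 / (cfDen a (m + 1) : ℝ) ^ 2 :=
        hclose2
      _ < ((a 1 : ℝ) + 3) / (cfDen a (m + 1) : ℝ) ^ 2 :=
        (div_lt_div_iff_of_pos_right (pow_pos hqn 2)).mpr (by linarith)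
  · calc |α ^ 2 - (cfNum a m : ℝ) / cfDen a (m + 1)| ≤ 3 / (cfDen a (m + 1) : ℝ) ^ 2 :=
        hsecond
      _ < ((a 1 : ℝ) + 3) / (cfDen a (m + 1) : ℝ) ^ 2 :=
        (div_lt_div_iff_of_pos_right (pow_pos hqn 2)).mpr (by linarith)
end

section
/- Let α = [0; a₁, a₂, …] be the continued fraction of a sequence of positive integers, with convergents (p_m/q_m)_{m≥0}. Suppose that the prefix a₁…a_s of the sequence of partial quotients has the form U V Ū for finite words U, V with |U| = r and |U V Ū| = s (so the last r letters are the mirror image of the first r letters). Then |q_s·α − q_{s−1}| < q_s·q_r^{−2}. -/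
open Filter Topology

lemma st14_den_pos (a : ℕ → ℕ) (ha : ∀ m, 1 ≤ m → 1 ≤ a m) : ∀ m, 1 ≤ cfDen a m := by
  intro m
  induction m using Nat.strong_induction_on with
  | _ m ih =>
    rcases m with _ | _ | n
    · simp [cfDen]
    · simpa [cfDen] using ha 1 le_rfl
    · have h1 := ih (n+1) (by omega)
      have h2 := ha (n+2) (by omega)
      simp only [cfDen]
      nlinarith

lemma st14_den_mono (a : ℕ → ℕ) (ha : ∀ m, 1 ≤ m → 1 ≤ a m) (m : ℕ) :
    cfDen a m ≤ cfDen a (m+1) := by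
  rcases m with _ | n
  · simpa [cfDen] using ha 1 le_rfl
  · have h1 := st14_den_pos a ha (n+1)
    have h2 := ha (n+2) (by omega)
    simp only [cfDen]
    nlinarith

lemma st14_det (a : ℕ → ℕ) : ∀ m, (cfNum a (m+1) : ℤ) * cfDen a m - (cfNum a m : ℤ) * cfDen a (m+1) = (-1)^m := by
  intro m
  induction m with
  | zero => simp [cfNum, cfDen]
  | succ n ih =>
    simp only [cfNum, cfDen]
    push_cast
    push_cast at ih
    ring_nf
    ring_nf at ih
    linarith

noncomputable def cR (a : ℕ → ℕ) (m : ℕ) : ℝ := (cfNum a m : ℝ) / (cfDen a m : ℝ)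

noncomputable def eR (a : ℕ → ℕ) (k : ℕ) : ℝ :=
  ((cfNum a (k+1) : ℝ) + (cfNum a k : ℝ)) / ((cfDen a (k+1) : ℝ) + (cfDen a k : ℝ))

lemma st14_denR_pos (a : ℕ → ℕ) (ha : ∀ m, 1 ≤ m → 1 ≤ a m) (m : ℕ) :
    (0 : ℝ) < (cfDen a m : ℝ) := by
  exact_mod_cast Nat.lt_of_lt_of_le Nat.zero_lt_one (st14_den_pos a ha m)

lemma st14_detR (a : ℕ → ℕ) (m : ℕ) :
    (cfNum a (m+1) : ℝ) * cfDen a m - (cfNum a m : ℝ) * cfDen a (m+1) = (-1)^m := by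
  exact_mod_cast congrArg (fun z : ℤ => (z : ℝ)) (st14_det a m)

lemma st14_diff (a : ℕ → ℕ) (ha : ∀ m, 1 ≤ m → 1 ≤ a m) (m : ℕ) :
    cR a (m+1) - cR a m = (-1)^m / ((cfDen a m : ℝ) * (cfDen a (m+1))) := by
  have h1 := st14_denR_pos a ha m
  have h2 := st14_denR_pos a ha (m+1)
  have hd := st14_detR a m
  unfold cR
  field_simp
  linear_combination hd

lemma st14_er_diff (a : ℕ → ℕ) (ha : ∀ m, 1 ≤ m → 1 ≤ a m) (k : ℕ) :
    eR a k - cR a (k+1) = (-1)^(k+1) / ((cfDen a (k+1) : ℝ) * ((cfDen a (k+1) : ℝ) + (cfDen a k : ℝ))) := by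
  have h1 := st14_denR_pos a ha k
  have h2 := st14_denR_pos a ha (k+1)
  have hd := st14_detR a k
  unfold cR eR
  rw [div_sub_div _ _ (by positivity) (by positivity), div_eq_div_iff (by positivity) (by positivity)]
  linear_combination (-((cfDen a (k+1) : ℝ) * ((cfDen a (k+1) : ℝ) + (cfDen a k : ℝ)))) * hd

lemma st14_step (a : ℕ → ℕ) (ha : ∀ m, 1 ≤ m → 1 ≤ a m) (m : ℕ) :
    cR a (m+2) ∈ Set.uIcc (cR a m) (cR a (m+1)) := by
  have d1 := st14_diff a ha m
  have d2 := st14_diff a ha (m+1)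
  have q0 := st14_denR_pos a ha m
  have q1 := st14_denR_pos a ha (m+1)
  have q2 := st14_denR_pos a ha (m+2)
  have hmono : (cfDen a m : ℝ) ≤ (cfDen a (m+2) : ℝ) := by
    exact_mod_cast le_trans (st14_den_mono a ha m) (st14_den_mono a ha (m+1))
  have hle : (1 : ℝ) / ((cfDen a (m+1) : ℝ) * (cfDen a (m+2))) ≤
      1 / ((cfDen a m : ℝ) * (cfDen a (m+1))) := by
    apply one_div_le_one_div_of_le (by positivity)
    nlinarith
  have hpos1 : (0:ℝ) < 1 / ((cfDen a m : ℝ) * (cfDen a (m+1))) := by positivity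
  have hpos2 : (0:ℝ) < 1 / ((cfDen a (m+1) : ℝ) * (cfDen a (m+2))) := by positivity
  rcases Nat.even_or_odd m with he | ho
  · have e1 : cR a (m+1) - cR a m = 1 / ((cfDen a m : ℝ) * (cfDen a (m+1))) := by
      rw [d1, he.neg_one_pow]
    have e2 : cR a (m+2) - cR a (m+1) = -(1 / ((cfDen a (m+1) : ℝ) * (cfDen a (m+2)))) := by
      rw [d2, Odd.neg_one_pow (by simpa using he.add_one)]
      ring
    rw [Set.mem_uIcc]
    left
    constructor <;> linarith
  · have e1 : cR a (m+1) - cR a m = -(1 / ((cfDen a m : ℝ) * (cfDen a (m+1)))) := by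
      rw [d1, ho.neg_one_pow]; ring
    have e2 : cR a (m+2) - cR a (m+1) = 1 / ((cfDen a (m+1) : ℝ) * (cfDen a (m+2))) := by
      rw [d2, Even.neg_one_pow (by simpa using ho.add_one)]
    rw [Set.mem_uIcc]
    right
    constructor <;> linarith

lemma st14_subset (a : ℕ → ℕ) (ha : ∀ m, 1 ≤ m → 1 ≤ a m) (r : ℕ) :
    ∀ m, r ≤ m → Set.uIcc (cR a m) (cR a (m+1)) ⊆ Set.uIcc (cR a r) (cR a (r+1)) := by
  intro m hm
  induction m, hm using Nat.le_induction with
  | base => exact subset_rfl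
  | succ m hm ih =>
    exact subset_trans (Set.uIcc_subset_uIcc (Set.right_mem_uIcc) (st14_step a ha m)) ih

lemma st14_mem (a : ℕ → ℕ) (ha : ∀ m, 1 ≤ m → 1 ≤ a m) (r m : ℕ) (hm : r ≤ m) :
    cR a m ∈ Set.uIcc (cR a r) (cR a (r+1)) :=
  st14_subset a ha r m hm Set.left_mem_uIcc

lemma st14_den_rec (a : ℕ → ℕ) (ha : ∀ m, 1 ≤ m → 1 ≤ a m) (k : ℕ) :
    (cfDen a (k+1) : ℝ) + (cfDen a k : ℝ) ≤ (cfDen a (k+2) : ℝ) := by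
  have h2 := ha (k+2) (by omega)
  have : cfDen a (k+1) + cfDen a k ≤ cfDen a (k+2) := by
    simp only [cfDen]
    nlinarith
  exact_mod_cast this

lemma st14_L3 (a : ℕ → ℕ) (ha : ∀ m, 1 ≤ m → 1 ≤ a m) (k : ℕ) :
    cR a (k+2) ∈ Set.uIcc (cR a (k+1)) (eR a k) := by
  have d1 := st14_diff a ha (k+1)
  have d2 := st14_er_diff a ha k
  have q0 := st14_denR_pos a ha k
  have q1 := st14_denR_pos a ha (k+1)
  have q2 := st14_denR_pos a ha (k+2)
  have hrec := st14_den_rec a ha k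
  have hle : (1 : ℝ) / ((cfDen a (k+1) : ℝ) * (cfDen a (k+2))) ≤
      1 / ((cfDen a (k+1) : ℝ) * ((cfDen a (k+1) : ℝ) + (cfDen a k : ℝ))) := by
    apply one_div_le_one_div_of_le (by positivity)
    nlinarith
  rcases Nat.even_or_odd k with he | ho
  · have e1 : cR a (k+2) - cR a (k+1) = -(1 / ((cfDen a (k+1) : ℝ) * (cfDen a (k+2)))) := by
      rw [d1, Odd.neg_one_pow (by simpa using he.add_one)]; ring
    have e2 : eR a k - cR a (k+1) =
        -(1 / ((cfDen a (k+1) : ℝ) * ((cfDen a (k+1) : ℝ) + (cfDen a k : ℝ)))) := by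
      rw [d2, Odd.neg_one_pow (by simpa using he.add_one)]; ring
    rw [Set.mem_uIcc]
    right
    have hpos : (0:ℝ) < 1 / ((cfDen a (k+1) : ℝ) * (cfDen a (k+2))) := by positivity
    constructor <;> linarith
  · have e1 : cR a (k+2) - cR a (k+1) = 1 / ((cfDen a (k+1) : ℝ) * (cfDen a (k+2))) := by
      rw [d1, Even.neg_one_pow (by simpa using ho.add_one)]
    have e2 : eR a k - cR a (k+1) =
        1 / ((cfDen a (k+1) : ℝ) * ((cfDen a (k+1) : ℝ) + (cfDen a k : ℝ))) := by
      rw [d2, Even.neg_one_pow (by simpa using ho.add_one)]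
    rw [Set.mem_uIcc]
    left
    have hpos : (0:ℝ) < 1 / ((cfDen a (k+1) : ℝ) * (cfDen a (k+2))) := by positivity
    constructor <;> linarith

lemma st14_main (a : ℕ → ℕ) (ha : ∀ m, 1 ≤ m → 1 ≤ a m) (k m : ℕ) (hm : k + 1 ≤ m) :
    cR a m ∈ Set.uIcc (cR a (k+1)) (eR a k) :=
  Set.uIcc_subset_uIcc Set.left_mem_uIcc (st14_L3 a ha k) (st14_mem a ha (k+1) m hm)

lemma st14_alpha_mem (a : ℕ → ℕ) (ha : ∀ m, 1 ≤ m → 1 ≤ a m) (α : ℝ)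
    (hα : Tendsto (fun m => (cfNum a m : ℝ) / cfDen a m) atTop (𝓝 α)) (r : ℕ) :
    α ∈ Set.uIcc (cR a r) (cR a (r+1)) := by
  have hcl : IsClosed (Set.uIcc (cR a r) (cR a (r+1))) := by
    rw [Set.uIcc]; exact isClosed_Icc
  refine hcl.mem_of_tendsto hα ?_
  filter_upwards [eventually_ge_atTop r] with m hm
  exact st14_mem a ha r m hm

lemma st14_alpha_mem' (a : ℕ → ℕ) (ha : ∀ m, 1 ≤ m → 1 ≤ a m) (α : ℝ)
    (hα : Tendsto (fun m => (cfNum a m : ℝ) / cfDen a m) atTop (𝓝 α)) (k : ℕ) :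
    α ∈ Set.uIcc (cR a (k+1)) (eR a k) :=
  Set.uIcc_subset_uIcc Set.left_mem_uIcc (st14_L3 a ha k) (st14_alpha_mem a ha α hα (k+1))

lemma st14_uIcc_dist {u v x y : ℝ} (hx : x ∈ Set.uIcc u v) (hy : y ∈ Set.uIcc u v) :
    |x - y| ≤ |u - v| := by
  rw [Set.mem_uIcc] at hx hy
  rw [abs_le]
  rcases abs_cases (u - v) with ⟨e, h⟩ | ⟨e, h⟩ <;>
    rcases hx with ⟨h1, h2⟩ | ⟨h1, h2⟩ <;> rcases hy with ⟨h3, h4⟩ | ⟨h3, h4⟩ <;>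
    constructor <;> linarith

open Matrix in
lemma st14_dummy_open : True := trivial

open Matrix

def st14M (x : ℕ) : Matrix (Fin 2) (Fin 2) ℕ := !![x, 1; 1, 0]

lemma st14M_transpose (x : ℕ) : (st14M x)ᵀ = st14M x := by
  ext i j
  fin_cases i <;> fin_cases j <;> rfl

def st14P (L : List ℕ) : Matrix (Fin 2) (Fin 2) ℕ := (L.map st14M).prod

lemma st14P_append (L1 L2 : List ℕ) : st14P (L1 ++ L2) = st14P L1 * st14P L2 := by
  simp [st14P]

lemma st14P_reverse (L : List ℕ) : st14P L.reverse = (st14P L)ᵀ := by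
  induction L with
  | nil => simp [st14P]
  | cons x t ih =>
    rw [List.reverse_cons, st14P_append, ih]
    have h1 : st14P (x :: t) = st14M x * st14P t := by simp [st14P]
    have h2 : st14P [x] = st14M x := by simp [st14P]
    rw [h1, h2, Matrix.transpose_mul, st14M_transpose]

def st14pref (a : ℕ → ℕ) (m : ℕ) : List ℕ := (List.range m).map (fun i => a (i+1))

lemma st14P_pref (a : ℕ → ℕ) : ∀ m, st14P (st14pref a (m+1)) =
    !![cfDen a (m+1), cfDen a m; cfNum a (m+1), cfNum a m] := by
  intro m
  induction m with
  | zero =>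
    have : st14pref a 1 = [a 1] := by rfl
    rw [this]
    have h2 : st14P [a 1] = st14M (a 1) := by simp [st14P]
    rw [h2]
    unfold st14M
    ext i j
    fin_cases i <;> fin_cases j <;> simp [cfNum, cfDen]
  | succ n ih =>
    have : st14pref a (n+2) = st14pref a (n+1) ++ [a (n+2)] := by
      simp [st14pref, List.range_succ]
    rw [this, st14P_append, ih]
    have h2 : st14P [a (n+2)] = st14M (a (n+2)) := by simp [st14P]
    rw [h2]
    unfold st14M
    ext i j
    fin_cases i <;> fin_cases j <;>
      simp [Matrix.mul_apply, Fin.sum_univ_two, cfNum, cfDen] <;> ring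

lemma st14_pref_rev (a b : ℕ → ℕ) (s : ℕ) (hb : ∀ i, i < s → b (i+1) = a (s - i)) :
    st14pref b s = (st14pref a s).reverse := by
  apply List.ext_getElem
  · simp [st14pref]
  · intro i h1 h2
    have hi : i < s := by simpa [st14pref] using h1
    simp only [st14pref, List.getElem_reverse, List.getElem_map, List.getElem_range]
    rw [hb i hi]
    congr 1
    simp [st14pref] at h2 ⊢
    omega

lemma st14_rev (a b : ℕ → ℕ) (n : ℕ) (hb : ∀ i, i < n + 1 → b (i+1) = a (n + 1 - i)) :
    cfDen b (n+1) = cfDen a (n+1) ∧ cfNum b (n+1) = cfDen a n := by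
  have h := st14P_pref b n
  rw [st14_pref_rev a b (n+1) hb, st14P_reverse, st14P_pref a n] at h
  constructor
  · have := congrFun (congrFun h 0) 0
    simpa [Matrix.transpose_apply] using this.symm
  · have := congrFun (congrFun h 1) 0
    simpa [Matrix.transpose_apply] using this.symm

lemma st14_congr (a a' : ℕ → ℕ) : ∀ m, (∀ i, 1 ≤ i → i ≤ m → a i = a' i) →
    cfNum a m = cfNum a' m ∧ cfDen a m = cfDen a' m := by
  intro m
  induction m using Nat.strong_induction_on with
  | _ m ih =>
    rcases m with _ | _ | n
    · intro _; simp [cfNum, cfDen]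
    · intro h; simp [cfNum, cfDen, h 1 le_rfl le_rfl]
    · intro h
      have h1 := ih (n+1) (by omega) (fun i hi1 hi2 => h i hi1 (by omega))
      have h0 := ih n (by omega) (fun i hi1 hi2 => h i hi1 (by omega))
      simp [cfNum, cfDen, h1.1, h1.2, h0.1, h0.2, h (n+2) (by omega) le_rfl]

lemma st14_t_mem (a : ℕ → ℕ) (ha : ∀ m, 1 ≤ m → 1 ≤ a m) (k s : ℕ) (hs : k + 1 ≤ s)
    (hmirror : ∀ i, 1 ≤ i → i ≤ k + 1 → a (s + 1 - i) = a i) :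
    ((cfDen a (s-1) : ℝ) / (cfDen a s : ℝ)) ∈ Set.uIcc (cR a (k+1)) (eR a k) := by
  set b : ℕ → ℕ := fun i => if 1 ≤ i ∧ i ≤ s then a (s + 1 - i) else 1 with hbdef
  have hbpos : ∀ m, 1 ≤ m → 1 ≤ b m := by
    intro m hm
    simp only [hbdef]
    split
    · exact ha _ (by omega)
    · exact le_rfl
  have hbrev : ∀ i, i < s → b (i+1) = a (s - i) := by
    intro i hi
    simp only [hbdef]
    rw [if_pos ⟨by omega, by omega⟩]
    congr 1
    omega
  have hcong : ∀ i, 1 ≤ i → i ≤ k + 1 → b i = a i := by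
    intro i h1 h2
    simp only [hbdef]
    rw [if_pos ⟨h1, by omega⟩]
    exact hmirror i h1 h2
  obtain ⟨n, rfl⟩ : ∃ n, s = n + 1 := ⟨s - 1, by omega⟩
  have hrev := st14_rev a b n (fun i hi => hbrev i hi)
  have hval : cR b (n+1) = (cfDen a (n+1-1) : ℝ) / (cfDen a (n+1) : ℝ) := by
    unfold cR
    rw [hrev.1, hrev.2]
    norm_num
  have hc1 := st14_congr b a (k+1) (fun i hi1 hi2 => hcong i hi1 hi2)
  have hc0 := st14_congr b a k (fun i hi1 hi2 => hcong i hi1 (by omega))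
  have hcR : cR b (k+1) = cR a (k+1) := by unfold cR; rw [hc1.1, hc1.2]
  have heR : eR b k = eR a k := by unfold eR; rw [hc1.1, hc1.2, hc0.1, hc0.2]
  have hmem := st14_main b hbpos k (n+1) hs
  rw [hval, hcR, heR] at hmem
  exact hmem

/-- If the prefix `a₁ … a_s` of the sequence of partial quotients of `α` has the form
`U V Ū` with `|U| = r` and `|U V Ū| = s`, then `|q_s α - q_{s-1}| < q_s / q_r²`. -/
theorem statement14 (a : ℕ → ℕ) (ha : ∀ m, 1 ≤ m → 1 ≤ a m)
    (α : ℝ)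
    (hα : Tendsto (fun m => (cfNum a m : ℝ) / cfDen a m) atTop (𝓝 α))
    (U V : List ℕ) (r s : ℕ) (hr : r = U.length) (hs : s = (U ++ V ++ U.reverse).length)
    (hpre : ∀ i, i < (U ++ V ++ U.reverse).length →
      (U ++ V ++ U.reverse).getD i 0 = a (i + 1)) :
    |(cfDen a s : ℝ) * α - (cfDen a (s - 1) : ℝ)| < (cfDen a s : ℝ) / (cfDen a r : ℝ) ^ 2 := by
  have hW : (U ++ V ++ U.reverse).length = r + V.length + r := by
    simp [hr]
    omega
  have hs2 : s = r + V.length + r := by rw [hs, hW]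
  have hrs : r ≤ s := by omega
  -- the mirror symmetry of the prefix
  have hmirror : ∀ i, 1 ≤ i → i ≤ r → a (s + 1 - i) = a i := by
    intro i h1 h2
    have hiW : i - 1 < (U ++ V ++ U.reverse).length := by omega
    have hsW : s - i < (U ++ V ++ U.reverse).length := by omega
    have hiU : i - 1 < U.length := by omega
    have e1 : a i = U[i-1] := by
      have hp := hpre (i-1) hiW
      rw [List.getD_eq_getElem _ _ hiW, show i - 1 + 1 = i by omega] at hp
      rw [← hp]
      rw [List.getElem_append_left (by simp; omega), List.getElem_append_left hiU]
    have e2 : a (s + 1 - i) = U[i-1] := by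
      have hp := hpre (s-i) hsW
      rw [List.getD_eq_getElem _ _ hsW, show s - i + 1 = s + 1 - i by omega] at hp
      rw [← hp]
      rw [List.getElem_append_right (by simp; omega)]
      rw [List.getElem_reverse]
      congr 1
      simp
      omega
    rw [e1, e2]
  have qspos := st14_denR_pos a ha s
  rcases Nat.eq_zero_or_pos r with hr0 | hrpos
  · -- r = 0
    have h0 : (cfDen a r : ℝ) = 1 := by rw [hr0]; simp [cfDen]
    rw [h0, one_pow, div_one]
    -- bounds on α
    have hα1 := st14_alpha_mem a ha α hα 1
    have hden1 := st14_denR_pos a ha 1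
    have hden2 := st14_denR_pos a ha 2
    have hnum1 : (cfNum a 1 : ℝ) = 1 := by norm_num [cfNum]
    have hnum2le : (cfNum a 2 : ℝ) ≤ (cfDen a 2 : ℝ) := by
      have e1 : cfNum a 2 = a 2 := by
        show a 2 * cfNum a 1 + cfNum a 0 = a 2
        simp [cfNum]
      have e2 : cfDen a 2 = a 2 * a 1 + 1 := by
        show a 2 * cfDen a 1 + cfDen a 0 = a 2 * a 1 + 1
        simp [cfDen]
      have := ha 1 le_rfl
      have h2 : cfNum a 2 ≤ cfDen a 2 := by rw [e1, e2]; nlinarith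
      exact_mod_cast h2
    have hnum2pos : (0:ℝ) < (cfNum a 2 : ℝ) := by
      have e1 : cfNum a 2 = a 2 := by
        show a 2 * cfNum a 1 + cfNum a 0 = a 2
        simp [cfNum]
      have := ha 2 (by omega)
      have : 0 < cfNum a 2 := by omega
      exact_mod_cast this
    have hc1pos : 0 < cR a 1 := by unfold cR; rw [hnum1]; positivity
    have hc1le : cR a 1 ≤ 1 := by
      unfold cR; rw [div_le_one hden1, hnum1]
      exact_mod_cast st14_den_pos a ha 1
    have hc2pos : 0 < cR a 2 := by unfold cR; positivity
    have hc2le : cR a 2 ≤ 1 := by unfold cR; rw [div_le_one hden2]; exact hnum2le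
    have hαpos : 0 < α ∧ α ≤ 1 := by
      rcases Set.mem_uIcc.1 hα1 with ⟨hx, hy⟩ | ⟨hx, hy⟩ <;> constructor <;> linarith
    rcases Nat.eq_zero_or_pos s with hs0 | hspos
    · subst hs0
      have : (cfDen a 0 : ℝ) = 1 := by simp [cfDen]
      rw [show (0:ℕ) - 1 = 0 from rfl, this]
      rw [abs_lt]
      constructor <;> nlinarith [hαpos.1, hαpos.2]
    · -- s ≥ 1, r = 0
      have hmono : (cfDen a (s-1) : ℝ) ≤ (cfDen a s : ℝ) := by
        have := st14_den_mono a ha (s-1)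
        rw [show s - 1 + 1 = s by omega] at this
        exact_mod_cast this
      have hqpos := st14_denR_pos a ha (s-1)
      rw [abs_lt]
      constructor <;> nlinarith [hαpos.1, hαpos.2]
  · -- r ≥ 1
    obtain ⟨k, rfl⟩ : ∃ k, r = k + 1 := ⟨r - 1, by omega⟩
    have hks : k + 1 ≤ s := hrs
    have htmem := st14_t_mem a ha k s hks hmirror
    have hαmem := st14_alpha_mem' a ha α hα k
    have hdist := st14_uIcc_dist hαmem htmem
    have q0 := st14_denR_pos a ha k
    have q1 := st14_denR_pos a ha (k+1)
    have hER := st14_er_diff a ha k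
    have habs : |cR a (k+1) - eR a k| =
        1 / ((cfDen a (k+1) : ℝ) * ((cfDen a (k+1) : ℝ) + (cfDen a k : ℝ))) := by
      rw [abs_sub_comm, hER, abs_div, abs_pow, abs_neg, abs_one, one_pow,
        abs_of_pos (by positivity)]
    rw [habs] at hdist
    have hstrict : (1:ℝ) / ((cfDen a (k+1) : ℝ) * ((cfDen a (k+1) : ℝ) + (cfDen a k : ℝ))) <
        1 / ((cfDen a (k+1) : ℝ))^2 := by
      apply one_div_lt_one_div_of_lt (by positivity)
      nlinarith
    have hkey : |α - (cfDen a (s-1) : ℝ) / (cfDen a s : ℝ)| < 1 / ((cfDen a (k+1) : ℝ))^2 :=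
      lt_of_le_of_lt hdist hstrict
    have heq : (cfDen a s : ℝ) * α - (cfDen a (s-1) : ℝ) =
        (cfDen a s : ℝ) * (α - (cfDen a (s-1) : ℝ) / (cfDen a s : ℝ)) := by
      field_simp
    rw [heq, abs_mul, abs_of_pos qspos]
    calc (cfDen a s : ℝ) * |α - (cfDen a (s-1) : ℝ) / (cfDen a s : ℝ)|
        < (cfDen a s : ℝ) * (1 / ((cfDen a (k+1) : ℝ))^2) := by
          exact mul_lt_mul_of_pos_left hkey qspos
      _ = (cfDen a s : ℝ) / ((cfDen a (k+1) : ℝ))^2 := by rw [mul_one_div]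
end
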